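/- arXiv:0910.5131 — 8 statements merged into one kernel-verified Lean document; each statement's English description precedes it below -/
import Mathlib

section
/- (Goodstein) Let L be a bounded distributive lattice. A function f : L^n → L is a polynomial function if and only if for all x₁,…,xₙ ∈ L, f(x₁,…,xₙ) = ⋁_{I ⊆ [n]} ( f(e_I) ∧ ⋀_{i ∈ I} xᵢ ), where e_I is the characteristic vector of I (component i equals 1 if i ∈ I and 0 otherwise). -/
inductive IsLatPoly {L : Type*} [DistribLattice L] [BoundedOrder L] {n : ℕ} :
    ((Fin n → L) → L) → Prop
  | proj (i : Fin n) : IsLatPoly (fun x => x i)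
  | const (c : L) : IsLatPoly (fun _ => c)
  | inf {f g : (Fin n → L) → L} : IsLatPoly f → IsLatPoly g → IsLatPoly (fun x => f x ⊓ g x)
  | sup {f g : (Fin n → L) → L} : IsLatPoly f → IsLatPoly g → IsLatPoly (fun x => f x ⊔ g x)

def charVec {L : Type*} [DistribLattice L] [BoundedOrder L] {n : ℕ}
    (I : Finset (Fin n)) : Fin n → L :=
  fun i => if i ∈ I then ⊤ else ⊥

/-!
The right-hand side is the disjunctive normal form `normalForm f`, visibly a polynomial. Conversely,
the functions equal to their normal form contain projections and constants and are closed under `⊔`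
by distributivity; among monotone functions they are also closed under `⊓`, because a term
`f (e_I) ⊓ g (e_J) ⊓ ⨅ i ∈ I ∪ J, x i` of the product is absorbed by the term of `I ∪ J`.
-/

section

variable {L : Type*} [DistribLattice L] [BoundedOrder L] {n : ℕ}

theorem charVec_monotone : Monotone (charVec (L := L) (n := n)) := by
  intro I J hIJ i
  unfold charVec
  split_ifs <;> simp_all [Finset.subset_iff]

theorem IsLatPoly.monotone {f : (Fin n → L) → L} (hf : IsLatPoly f) : Monotone f := by
  induction hf with
  | proj i => exact fun _ _ hxy => hxy i
  | const c => exact monotone_const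
  | inf _ _ ihf ihg => exact ihf.inf ihg
  | sup _ _ ihf ihg => exact ihf.sup ihg

theorem IsLatPoly.finset_inf {ι : Type*} (s : Finset ι) {g : ι → (Fin n → L) → L}
    (hg : ∀ i ∈ s, IsLatPoly (g i)) : IsLatPoly fun x => s.inf fun i => g i x := by
  induction s using Finset.cons_induction with
  | empty => exact IsLatPoly.const ⊤
  | cons a s _ ih =>
    simp only [Finset.inf_cons]
    exact .inf (hg a (s.mem_cons_self a)) (ih fun i hi => hg i (Finset.mem_cons_of_mem hi))

theorem IsLatPoly.finset_sup {ι : Type*} (s : Finset ι) {g : ι → (Fin n → L) → L}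
    (hg : ∀ i ∈ s, IsLatPoly (g i)) : IsLatPoly fun x => s.sup fun i => g i x := by
  induction s using Finset.cons_induction with
  | empty => exact IsLatPoly.const ⊥
  | cons a s _ ih =>
    simp only [Finset.sup_cons]
    exact .sup (hg a (s.mem_cons_self a)) (ih fun i hi => hg i (Finset.mem_cons_of_mem hi))

def normalForm (f : (Fin n → L) → L) (x : Fin n → L) : L :=
  (Finset.univ : Finset (Finset (Fin n))).sup fun I => f (charVec I) ⊓ I.inf x

theorem isLatPoly_normalForm (f : (Fin n → L) → L) : IsLatPoly (normalForm f) :=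
  IsLatPoly.finset_sup _ fun I _ =>
    .inf (.const _) (IsLatPoly.finset_inf I fun i _ => .proj i)

theorem normalForm_proj (i : Fin n) : normalForm (fun x : Fin n → L => x i) = fun x => x i := by
  funext x
  apply le_antisymm
  · refine Finset.sup_le fun I _ => ?_
    by_cases hi : i ∈ I
    · exact inf_le_of_right_le (Finset.inf_le hi)
    · simp [charVec, hi]
  · calc x i = charVec {i} i ⊓ ({i} : Finset (Fin n)).inf x := by simp [charVec]
      _ ≤ normalForm (fun x : Fin n → L => x i) x :=
        Finset.le_sup (f := fun I => charVec I i ⊓ I.inf x) (Finset.mem_univ _)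

theorem normalForm_const (c : L) : normalForm (fun _ : Fin n → L => c) = fun _ => c := by
  funext x
  have hsup : (Finset.univ : Finset (Finset (Fin n))).sup (fun I => I.inf x) = ⊤ :=
    top_unique (Finset.le_sup (f := fun I : Finset (Fin n) => I.inf x) (Finset.mem_univ ∅))
  simp only [normalForm, ← Finset.sup_inf_distrib_left, hsup, inf_top_eq]

theorem normalForm_sup (f g : (Fin n → L) → L) :
    normalForm (fun x => f x ⊔ g x) = normalForm f ⊔ normalForm g := by
  funext x
  simp only [normalForm, Pi.sup_apply, ← Finset.sup_sup, inf_sup_right]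
  rfl

theorem normalForm_inf {f g : (Fin n → L) → L} (hf : Monotone f) (hg : Monotone g) :
    normalForm (fun x => f x ⊓ g x) = normalForm f ⊓ normalForm g := by
  funext x
  simp only [normalForm, Pi.inf_apply, Finset.sup_inf_sup]
  apply le_antisymm
  · refine Finset.sup_le fun I _ => ?_
    refine le_trans ?_ (Finset.le_sup (Finset.mem_univ (I, I)))
    exact le_inf (inf_le_inf_right _ inf_le_left) (inf_le_inf_right _ inf_le_right)
  · refine Finset.sup_le fun ⟨I, J⟩ _ => ?_
    refine le_trans ?_ (Finset.le_sup (Finset.mem_univ (I ∪ J)))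
    have hI : f (charVec I) ≤ f (charVec (I ∪ J)) :=
      hf (charVec_monotone Finset.subset_union_left)
    have hJ : g (charVec J) ≤ g (charVec (I ∪ J)) :=
      hg (charVec_monotone Finset.subset_union_right)
    rw [Finset.inf_union]
    exact le_inf (le_inf (inf_le_of_left_le (inf_le_of_left_le hI))
        (inf_le_of_right_le (inf_le_of_left_le hJ)))
      (inf_le_inf inf_le_right inf_le_right)

theorem IsLatPoly.normalForm_eq {f : (Fin n → L) → L} (hf : IsLatPoly f) : normalForm f = f := by
  induction hf with
  | proj i => exact normalForm_proj i
  | const c => exact normalForm_const c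
  | inf hf hg ihf ihg => rw [normalForm_inf hf.monotone hg.monotone, ihf, ihg]; rfl
  | sup _ _ ihf ihg => rw [normalForm_sup, ihf, ihg]; rfl

end

theorem goodstein {L : Type*} [DistribLattice L] [BoundedOrder L] {n : ℕ}
    (f : (Fin n → L) → L) :
    IsLatPoly f ↔
      ∀ x : Fin n → L,
        f x = (Finset.univ : Finset (Finset (Fin n))).sup
          (fun I => f (charVec I) ⊓ I.inf x) := by
  constructor
  · exact fun hf x => (congrFun hf.normalForm_eq x).symm
  · intro hf
    rw [show f = normalForm f from funext hf]
    exact isLatPoly_normalForm f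
end

section
/- Every polynomial function f : L^n → L over a bounded distributive lattice is uniquely determined by its restriction to {0,1}^n: if two polynomial functions agree on all tuples with entries in {0,1} ⊆ L, then they are equal. -/
private def chiFn {L : Type*} [DistribLattice L] [BoundedOrder L] {n : ℕ}
    (S : Finset (Fin n)) : Fin n → L :=
  fun i => if i ∈ S then ⊤ else ⊥

private lemma chiFn_mono {L : Type*} [DistribLattice L] [BoundedOrder L] {n : ℕ}
    {S T : Finset (Fin n)} (h : S ⊆ T) : (chiFn (L := L) S) ≤ chiFn T := by
  intro i
  unfold chiFn
  by_cases hi : i ∈ S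
  · simp [hi, h hi]
  · simp [hi]

private lemma IsLatPoly.mono {L : Type*} [DistribLattice L] [BoundedOrder L] {n : ℕ}
    {f : (Fin n → L) → L} (hf : IsLatPoly f) : Monotone f := by
  induction hf with
  | proj i => exact fun a b hab => hab i
  | const c => exact monotone_const
  | inf _ _ ihf ihg => exact fun a b hab => inf_le_inf (ihf hab) (ihg hab)
  | sup _ _ ihf ihg => exact fun a b hab => sup_le_sup (ihf hab) (ihg hab)

private lemma normal_form {L : Type*} [DistribLattice L] [BoundedOrder L] {n : ℕ}
    {f : (Fin n → L) → L} (hf : IsLatPoly f) (x : Fin n → L) :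
    f x = (Finset.univ : Finset (Finset (Fin n))).sup (fun S => f (chiFn S) ⊓ S.inf x) := by
  induction hf with
  | proj i =>
    beta_reduce
    apply le_antisymm
    · have : x i ≤ (chiFn {i} : Fin n → L) i ⊓ Finset.inf {i} x := by
        simp [chiFn]
      exact Finset.le_sup_of_le (Finset.mem_univ ({i} : Finset (Fin n))) this
    · apply Finset.sup_le
      intro S _
      by_cases hi : i ∈ S
      · simp only [chiFn, hi, if_true]
        exact inf_le_right.trans (Finset.inf_le hi)
      · simp [chiFn, hi]
  | const c =>
    beta_reduce
    apply le_antisymm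
    · have : c ≤ c ⊓ Finset.inf ∅ x := by simp
      exact Finset.le_sup_of_le (Finset.mem_univ (∅ : Finset (Fin n))) this
    · exact Finset.sup_le fun S _ => inf_le_left
  | sup hf' hg' ihf ihg =>
    rename_i p q
    beta_reduce
    apply le_antisymm
    · rw [ihf, ihg]
      apply sup_le
      · apply Finset.sup_le
        intro S _
        exact Finset.le_sup_of_le (Finset.mem_univ S) (inf_le_inf_right _ le_sup_left)
      · apply Finset.sup_le
        intro S _
        exact Finset.le_sup_of_le (Finset.mem_univ S) (inf_le_inf_right _ le_sup_right)
    · apply Finset.sup_le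
      intro S _
      rw [inf_sup_right, ihf, ihg]
      exact sup_le_sup (Finset.le_sup_of_le (Finset.mem_univ S) le_rfl) (Finset.le_sup_of_le (Finset.mem_univ S) le_rfl)
  | inf hf' hg' ihf ihg =>
    rename_i p q
    beta_reduce
    apply le_antisymm
    · rw [ihf, ihg, Finset.sup_inf_sup]
      apply Finset.sup_le
      rintro ⟨S, T⟩ _
      simp only
      have h1 : p (chiFn S) ⊓ S.inf x ⊓ (q (chiFn T) ⊓ T.inf x) ≤
          (p (chiFn (S ∪ T)) ⊓ q (chiFn (S ∪ T))) ⊓ (S ∪ T).inf x := by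
        rw [Finset.inf_union]
        have hfm := hf'.mono (chiFn_mono (L := L) (Finset.subset_union_left (s₁ := S) (s₂ := T)))
        have hgm := hg'.mono (chiFn_mono (L := L) (Finset.subset_union_right (s₁ := S) (s₂ := T)))
        refine le_inf (le_inf ?_ ?_) ?_
        · exact le_trans inf_le_left (le_trans inf_le_left hfm)
        · exact le_trans inf_le_right (le_trans inf_le_left hgm)
        · exact le_inf (le_trans inf_le_left inf_le_right) (le_trans inf_le_right inf_le_right)
      exact Finset.le_sup_of_le (Finset.mem_univ (S ∪ T)) h1
    · apply Finset.sup_le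
      intro S _
      rw [ihf, ihg]
      refine le_inf ?_ ?_
      · exact Finset.le_sup_of_le (Finset.mem_univ S) (inf_le_inf_right _ inf_le_left)
      · exact Finset.le_sup_of_le (Finset.mem_univ S) (inf_le_inf_right _ inf_le_right)

theorem poly_determined_by_boolean_tuples {L : Type*} [DistribLattice L] [BoundedOrder L]
    {n : ℕ} {f g : (Fin n → L) → L} (hf : IsLatPoly f) (hg : IsLatPoly g)
    (h : ∀ x : Fin n → L, (∀ i, x i = ⊥ ∨ x i = ⊤) → f x = g x) :
    f = g := by
  funext x
  rw [normal_form hf x, normal_form hg x]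
  apply Finset.sup_congr rfl
  intro S _
  have : f (chiFn S) = g (chiFn S) := by
    apply h
    intro i
    unfold chiFn
    by_cases hi : i ∈ S <;> simp [hi]
  rw [this]
end

section
/- A function f : {0,1}^n → L into a bounded distributive lattice L can be extended to a polynomial function L^n → L if and only if f is order-preserving (with respect to the componentwise order on {0,1}^n induced by 0 ≤ 1 in L). -/
def boolEmb {L : Type*} [DistribLattice L] [BoundedOrder L] : Bool → L :=
  fun b => if b then ⊤ else ⊥

theorem isLatPoly_monotone {L : Type*} [DistribLattice L] [BoundedOrder L] {n : ℕ}
    {g : (Fin n → L) → L} (h : IsLatPoly g) : Monotone g := by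
  induction h with
  | proj i => exact fun a b hab => hab i
  | const c => exact monotone_const
  | inf _ _ ihf ihg => exact fun a b hab => inf_le_inf (ihf hab) (ihg hab)
  | sup _ _ ihf ihg => exact fun a b hab => sup_le_sup (ihf hab) (ihg hab)

theorem isLatPoly_finset_sup {L : Type*} [DistribLattice L] [BoundedOrder L] {n : ℕ}
    {α : Type*} [DecidableEq α] (s : Finset α) (F : α → (Fin n → L) → L)
    (h : ∀ a ∈ s, IsLatPoly (F a)) : IsLatPoly (fun y => s.sup (fun a => F a y)) := by
  induction s using Finset.cons_induction with
  | empty => simpa using IsLatPoly.const (⊥ : L)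
  | cons a s ha ih =>
    simp only [Finset.sup_cons]
    exact IsLatPoly.sup (h a (by simp)) (ih fun b hb => h b (by simp [hb]))

theorem isLatPoly_finset_inf {L : Type*} [DistribLattice L] [BoundedOrder L] {n : ℕ}
    (s : Finset (Fin n)) : IsLatPoly (fun y : Fin n → L => s.inf y) := by
  induction s using Finset.cons_induction with
  | empty => simpa using IsLatPoly.const (⊤ : L)
  | cons a s ha ih =>
    simp only [Finset.inf_cons]
    exact IsLatPoly.inf (IsLatPoly.proj a) ih

theorem extendable_iff_monotone {L : Type*} [DistribLattice L] [BoundedOrder L] {n : ℕ}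
    (f : (Fin n → Bool) → L) :
    (∃ g : (Fin n → L) → L, IsLatPoly g ∧
        ∀ x : Fin n → Bool, g (fun i => boolEmb (x i)) = f x) ↔
      Monotone f := by
  constructor
  · rintro ⟨g, hg, hag⟩ x y hxy
    rw [← hag x, ← hag y]
    refine isLatPoly_monotone hg fun i => ?_
    have := hxy i
    cases hx : x i <;> cases hy : y i <;> simp_all [boolEmb, Bool.le_iff_imp]
  · intro hf
    refine ⟨fun y => (Finset.univ : Finset (Fin n → Bool)).sup
        (fun x => f x ⊓ (Finset.univ.filter (fun i => x i = true)).inf y), ?_, ?_⟩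
    · refine isLatPoly_finset_sup _ _ fun x _ => ?_
      exact IsLatPoly.inf (IsLatPoly.const (f x)) (isLatPoly_finset_inf _)
    · intro z
      apply le_antisymm
      · refine Finset.sup_le fun x _ => ?_
        by_cases hxz : x ≤ z
        · exact inf_le_of_left_le (hf hxz)
        · rw [Pi.le_def] at hxz
          push_neg at hxz
          obtain ⟨i, hi⟩ := hxz
          rw [Bool.lt_iff] at hi
          have h1 : (Finset.univ.filter (fun j => x j = true)).inf
              (fun j => (boolEmb (z j) : L)) ≤ ⊥ := by
            have := Finset.inf_le (f := fun j => (boolEmb (z j) : L))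
              (show i ∈ Finset.univ.filter (fun j => x j = true) by
                simp [hi.2])
            simpa [boolEmb, hi.1] using this
          exact le_trans inf_le_right (le_trans h1 bot_le)
      · refine le_trans ?_ (Finset.le_sup (Finset.mem_univ z))
        have : (Finset.univ.filter (fun i => z i = true)).inf
            (fun i => (boolEmb (z i) : L)) = (⊤ : L) := by
          rw [Finset.inf_eq_top_iff]
          intro i hi
          simp only [Finset.mem_filter] at hi
          simp [boolEmb, hi.2]
        simp [this]
end

section
/- (Salomaa's example) Let A be a finite set with k ≥ 2 elements, let b ∈ A^k be a tuple with pairwise distinct entries, and let c ≠ d in A. Define f : A^k → A by f(a) = c if a = b and f(a) = d otherwise. Then all k variables of f are essential, but every variable identification minor f_{i←j} (i ≠ j) of f is constant. Hence the arity gap of f equals k. -/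
def EssentialAt {A B : Type*} {n : ℕ} (f : (Fin n → A) → B) (j : Fin n) : Prop :=
  ∃ (a : Fin n → A) (b : A), f (Function.update a j b) ≠ f a

noncomputable def essArity {A B : Type*} {n : ℕ} (f : (Fin n → A) → B) : ℕ :=
  Set.ncard {j | EssentialAt f j}

def idMinor {A B : Type*} {n : ℕ} (f : (Fin n → A) → B) (i j : Fin n) :
    (Fin n → A) → B :=
  fun x => f (Function.update x i (x j))

noncomputable def arityGap {A B : Type*} {n : ℕ} (f : (Fin n → A) → B) : ℕ :=
  sInf {d | ∃ i j, i ≠ j ∧ EssentialAt f i ∧ EssentialAt f j ∧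
    d = essArity f - essArity (idMinor f i j)}

theorem salomaa_example {A : Type*} [Fintype A] {k : ℕ} [DecidableEq A]
    (hk : 2 ≤ k) (hcard : Fintype.card A = k)
    (b : Fin k → A) (hb : Function.Injective b)
    (c d : A) (hcd : c ≠ d)
    (f : (Fin k → A) → A) (hf : ∀ a : Fin k → A, f a = if a = b then c else d) :
    (∀ i : Fin k, EssentialAt f i) ∧
      (∀ i j : Fin k, i ≠ j → ∀ x y : Fin k → A, idMinor f i j x = idMinor f i j y) ∧
      arityGap f = k := by
  have hess : ∀ i : Fin k, EssentialAt f i := by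
    intro i
    obtain ⟨v, hv⟩ : ∃ v : A, v ≠ b i := by
      apply Fintype.exists_ne_of_one_lt_card
      omega
    refine ⟨b, v, ?_⟩
    have h1 : Function.update b i v ≠ b := by
      intro h
      have := congrFun h i
      simp at this
      exact hv this
    rw [hf, hf]
    simp [h1]
    exact fun h => hcd h.symm
  have hconst : ∀ (i j : Fin k), i ≠ j → ∀ x : Fin k → A,
      idMinor f i j x = d := by
    intro i j hij x
    have hne : Function.update x i (x j) ≠ b := by
      intro h
      have h1 : b i = x j := by
        have := congrFun h i; simpa using this.symm
      have h2 : b j = x j := by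
        have := congrFun h j
        simpa [Function.update_of_ne (Ne.symm hij)] using this.symm
      exact hij (hb (h1.trans h2.symm))
    simp [idMinor, hf, hne]
  refine ⟨hess, fun i j hij x y => by rw [hconst i j hij x, hconst i j hij y], ?_⟩
  have hA : essArity f = k := by
    have : {j | EssentialAt f j} = Set.univ := by
      ext j; simp [hess j]
    rw [essArity, this, Set.ncard_univ]
    simp
  have hM : ∀ (i j : Fin k), i ≠ j → essArity (idMinor f i j) = 0 := by
    intro i j hij
    have : {l | EssentialAt (idMinor f i j) l} = ∅ := by
      ext l
      simp only [Set.mem_setOf_eq, Set.mem_empty_iff_false, iff_false]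
      rintro ⟨a, v, hne⟩
      exact hne ((hconst i j hij _).trans (hconst i j hij _).symm)
    rw [essArity, this, Set.ncard_empty]
  have h01 : (⟨0, by omega⟩ : Fin k) ≠ ⟨1, by omega⟩ := by
    simp [Fin.ext_iff]
  have hset : {d | ∃ i j, i ≠ j ∧ EssentialAt f i ∧ EssentialAt f j ∧
      d = essArity f - essArity (idMinor f i j)} = {k} := by
    ext n
    simp only [Set.mem_setOf_eq, Set.mem_singleton_iff]
    constructor
    · rintro ⟨i, j, hij, _, _, rfl⟩
      rw [hA, hM i j hij]; omega
    · rintro rfl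
      exact ⟨_, _, h01, hess _, hess _, by have := hM _ _ h01; omega⟩
  rw [arityGap, hset, csInf_singleton]
end

section
/- For any elements a < b in a bounded distributive lattice L, the truncated median function f(x₁,x₂,x₃) = (a ∨ med(x₁,x₂,x₃)) ∧ b has arity gap 2: each of its three variables is essential, and identifying any two of them yields a function with exactly one essential variable. -/
theorem truncated_median_arity_gap_two {L : Type*} [DistribLattice L] [BoundedOrder L]
    {a b : L} (hab : a < b) (f : (Fin 3 → L) → L)
    (hf : ∀ x : Fin 3 → L, f x = (a ⊔ ((x 0 ⊓ x 1) ⊔ (x 1 ⊓ x 2) ⊔ (x 2 ⊓ x 0))) ⊓ b) :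
    (∀ i : Fin 3, EssentialAt f i) ∧
      (∀ i j : Fin 3, i ≠ j → essArity (idMinor f i j) = 1) ∧
      arityGap f = 2 := by
  have hab' : a ⊓ b = a := inf_eq_left.mpr hab.le
  have hab'' : b ⊓ a = a := inf_eq_right.mpr hab.le
  have hne : a ≠ b := hab.ne
  -- each variable is essential in f
  have hess : ∀ i : Fin 3, EssentialAt f i := by
    intro i
    fin_cases i
    · refine ⟨![a, b, a], b, ?_⟩
      simp [hf, Function.update, hab', hab'', hne.symm]
    · refine ⟨![b, a, a], b, ?_⟩
      simp [hf, Function.update, hab', hab'', hne.symm]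
    · refine ⟨![b, a, a], b, ?_⟩
      simp [hf, Function.update, hab', hab'', hne.symm]
  -- identification minors are unary truncations
  have key : ∀ i j : Fin 3, i ≠ j → ∀ x, idMinor f i j x = (a ⊔ x j) ⊓ b := by
    intro i j hij x
    fin_cases i <;> fin_cases j <;> simp_all [idMinor, hf, Function.update]
  -- essential variables of a minor : exactly j
  have hminorSet : ∀ i j : Fin 3, i ≠ j →
      {t | EssentialAt (idMinor f i j) t} = {j} := by
    intro i j hij
    ext t
    simp only [Set.mem_setOf_eq, Set.mem_singleton_iff]
    constructor
    · intro ⟨x, c, hx⟩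
      by_contra ht
      apply hx
      rw [key i j hij, key i j hij, Function.update_of_ne (Ne.symm ht)]
    · intro ht
      refine ⟨fun _ => a, b, ?_⟩
      rw [key i j hij, key i j hij, ht]
      simp [hab', hne.symm]
  have hminor : ∀ i j : Fin 3, i ≠ j → essArity (idMinor f i j) = 1 := by
    intro i j hij
    rw [essArity, hminorSet i j hij, Set.ncard_singleton]
  -- essArity f = 3
  have hessf : essArity f = 3 := by
    have : {t | EssentialAt f t} = Set.univ := by
      ext t; simpa using hess t
    rw [essArity, this, Set.ncard_univ]
    simp
  refine ⟨hess, hminor, ?_⟩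
  have hset : {d | ∃ i j, i ≠ j ∧ EssentialAt f i ∧ EssentialAt f j ∧
      d = essArity f - essArity (idMinor f i j)} = {2} := by
    ext d
    simp only [Set.mem_setOf_eq, Set.mem_singleton_iff]
    constructor
    · rintro ⟨i, j, hij, -, -, rfl⟩
      rw [hessf, hminor i j hij]
    · rintro rfl
      exact ⟨0, 1, by decide, hess 0, hess 1,
        by rw [hessf, hminor 0 1 (by decide)]⟩
  rw [arityGap, hset, csInf_singleton]
end

section
/- (Main theorem) Let L be a bounded distributive lattice and f : L^n → L a polynomial function with at least two essential variables. Then gap f = 2 if and only if there exist a < b in L and indices i, j, k (of essential variables) such that f(x₁,…,xₙ) = (a ∨ med(x_i, x_j, x_k)) ∧ b for all x, with all other variables inessential; otherwise gap f = 1. -/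
section Combinatorial

variable {α : Type*} [DecidableEq α] {β : Type*} [PartialOrder β]

def Jmp (c : Finset α → β) (v : α) (S : Finset α) : Prop :=
  v ∉ S ∧ c S ≠ c (insert v S)

def Spr (c : Finset α → β) (p q z : α) : Prop :=
  ∀ S, Jmp c z S → (p ∈ S ↔ q ∉ S)

def WClosed (c : Finset α → β) (E₀ : Finset α) : Prop :=
  ∀ p ∈ E₀, ∀ q ∈ E₀, p ≠ q →
    ∃ z ∈ E₀, z ≠ p ∧ z ≠ q ∧ (∃ S, Jmp c z S) ∧ Spr c p q z

omit [PartialOrder β] in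
lemma Spr.symm {c : Finset α → β} {p q z : α} (h : Spr c p q z) : Spr c q p z := by
  intro S hS
  have := h S hS
  tauto

lemma key_lemma {c : Finset α → β} (Mc : ∀ ⦃S T : Finset α⦄, S ⊆ T → c S ≤ c T)
    (E₀ : Finset α) (hwc : WClosed c E₀)
    (IH : ∀ E' : Finset α, E'.card < E₀.card → WClosed c E' → E'.card ≤ 3)
    (i j k : α) (S : Finset α)
    (hiE : i ∈ E₀) (hjE : j ∈ E₀) (hkE : k ∈ E₀)
    (hij : i ≠ j) (hki : k ≠ i) (hkj : k ≠ j)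
    (hsep : Spr c i j k) (hjmp : Jmp c k S) (hiS : i ∈ S) (hjS : j ∉ S)
    (hminK : ∀ l ∈ S, ¬ Jmp c k (S.erase l)) (hcard4 : 4 ≤ E₀.card) : False := by
  classical
  have hkS : k ∉ S := hjmp.1
  have hlt : c S < c (insert k S) :=
    lt_of_le_of_ne (Mc (Finset.subset_insert k S)) hjmp.2
  have F4 : ∀ l ∈ S, Jmp c l (insert k (S.erase l)) := by
    intro l hl
    have heq : c (S.erase l) = c (insert k (S.erase l)) := by
      by_contra hne
      exact hminK l hl ⟨fun hm => hkS (Finset.mem_of_mem_erase hm), hne⟩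
    have hset : insert l (insert k (S.erase l)) = insert k S := by
      ext w
      simp only [Finset.mem_insert, Finset.mem_erase]
      constructor
      · rintro (rfl | rfl | ⟨_, hw⟩)
        · exact Or.inr hl
        · exact Or.inl rfl
        · exact Or.inr hw
      · rintro (rfl | hw)
        · exact Or.inr (Or.inl rfl)
        · by_cases hwl : w = l
          · exact Or.inl hwl
          · exact Or.inr (Or.inr ⟨hwl, hw⟩)
    refine ⟨?_, ?_⟩
    · simp only [Finset.mem_insert, Finset.mem_erase]
      push_neg
      exact ⟨fun h => hkS (h ▸ hl), fun h => absurd rfl h⟩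
    · have hchain : c (insert k (S.erase l)) < c (insert l (insert k (S.erase l))) := by
        rw [hset, ← heq]
        exact lt_of_le_of_lt (Mc (Finset.erase_subset l S)) hlt
      exact hchain.ne
  have F2 : Jmp c i (insert k (S.erase i)) := F4 i hiS
  have F3 : Jmp c j S := by
    refine ⟨hjS, ?_⟩
    have e4 : c (insert j S) = c (insert k (insert j S)) := by
      by_contra hne
      have hj2 : Jmp c k (insert j S) := by
        refine ⟨?_, hne⟩
        simp only [Finset.mem_insert]
        push_neg
        exact ⟨hkj, hkS⟩
      have h2 := hsep _ hj2
      exact (h2.mp (Finset.mem_insert_of_mem hiS)) (Finset.mem_insert_self j S)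
    have hstrict : c S < c (insert j S) := by
      calc c S < c (insert k S) := hlt
        _ ≤ c (insert k (insert j S)) :=
          Mc (Finset.insert_subset_insert k (Finset.subset_insert j S))
        _ = c (insert j S) := e4.symm
    exact hstrict.ne
  set V : Finset α := E₀ \ {i, j, k} with hV
  have hmemV : ∀ w, w ∈ V ↔ w ∈ E₀ ∧ w ≠ i ∧ w ≠ j ∧ w ≠ k := by
    intro w
    simp only [hV, Finset.mem_sdiff, Finset.mem_insert, Finset.mem_singleton]
    push_neg
    tauto
  have hsubIJK : ({i, j, k} : Finset α) ⊆ E₀ := by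
    intro w hw
    simp only [Finset.mem_insert, Finset.mem_singleton] at hw
    rcases hw with rfl | rfl | rfl
    · exact hiE
    · exact hjE
    · exact hkE
  have hcard3 : ({i, j, k} : Finset α).card = 3 := by
    rw [Finset.card_insert_of_notMem (by simp [hij, hki.symm]),
      Finset.card_insert_of_notMem (by simp [hkj.symm]), Finset.card_singleton]
  have hcardV : V.card = E₀.card - 3 := by
    rw [hV, Finset.card_sdiff_of_subset hsubIJK, hcard3]
  have hmemX : ∀ l ∈ S, ∀ w, (w ∈ insert k (S.erase l) ↔ w = k ∨ (w ∈ S ∧ w ≠ l)) := by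
    intro l _ w
    simp only [Finset.mem_insert, Finset.mem_erase]
    tauto
  have F5 : ∀ s ∈ V, s ∉ S → ∃ z ∈ V, z ∉ S ∧ z ≠ s ∧ (∃ S', Jmp c z S') ∧ Spr c j s z := by
    intro s hsV hsS
    obtain ⟨hsE, hsi, hsj, hsk⟩ := (hmemV s).mp hsV
    obtain ⟨z, hzE, hzj, hzs, hzjump, hzsep⟩ := hwc j hjE s hsE hsj.symm
    have hzi : z ≠ i := by
      intro heq
      rw [heq] at hzsep
      have hiff := hzsep _ F2
      have hjX' : j ∉ insert k (S.erase i) := by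
        rw [hmemX i hiS j]
        push_neg
        exact ⟨hkj.symm, fun h => absurd h hjS⟩
      have hsX : s ∈ insert k (S.erase i) := by
        by_contra hns
        exact hjX' (hiff.mpr hns)
      rw [hmemX i hiS s] at hsX
      rcases hsX with rfl | ⟨h1, _⟩
      · exact hsk rfl
      · exact hsS h1
    have hzk : z ≠ k := by
      intro heq
      rw [heq] at hzsep
      have hiff := hzsep _ hjmp
      have hsmem : s ∈ S := by
        by_contra hns
        exact hjS (hiff.mpr hns)
      exact hsS hsmem
    have hznS : z ∉ S := by
      intro hzS
      have hiff := hzsep _ (F4 z hzS)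
      have hjX : j ∉ insert k (S.erase z) := by
        rw [hmemX z hzS j]
        push_neg
        exact ⟨hkj.symm, fun h => absurd h hjS⟩
      have hsX : s ∈ insert k (S.erase z) := by
        by_contra hns
        exact hjX (hiff.mpr hns)
      rw [hmemX z hzS s] at hsX
      rcases hsX with rfl | ⟨h1, _⟩
      · exact hsk rfl
      · exact hsS h1
    exact ⟨z, (hmemV z).mpr ⟨hzE, hzi, hzj, hzk⟩, hznS, hzs, hzjump, hzsep⟩
  have F6 : ∀ l ∈ V, l ∈ S → ∃ z ∈ V, z ∉ S := by
    intro l hlV hlS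
    obtain ⟨hlE, hli, hlj, hlk⟩ := (hmemV l).mp hlV
    obtain ⟨z, hzE, hzi, hzl, hzjump, hzsep⟩ := hwc i hiE l hlE hli.symm
    have hzj : z ≠ j := by
      intro heq
      rw [heq] at hzsep
      have hiff := hzsep _ F3
      exact (hiff.mp hiS) hlS
    have hzk : z ≠ k := by
      intro heq
      rw [heq] at hzsep
      have hiff := hzsep _ hjmp
      exact (hiff.mp hiS) hlS
    have hznS : z ∉ S := by
      intro hzS
      have hiff := hzsep _ (F4 z hzS)
      have hiX : i ∈ insert k (S.erase z) := by
        rw [hmemX z hzS i]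
        exact Or.inr ⟨hiS, fun h => hzi h.symm⟩
      have hlX : l ∈ insert k (S.erase z) := by
        rw [hmemX z hzS l]
        exact Or.inr ⟨hlS, fun h => hzl h.symm⟩
      exact (hiff.mp hiX) hlX
    exact ⟨z, (hmemV z).mpr ⟨hzE, hzi, hzj, hzk⟩, hznS⟩
  have F7 : ∀ s ∈ V, ∀ t ∈ V, s ∉ S → t ∉ S → s ≠ t →
      ∃ z ∈ V, z ∉ S ∧ z ≠ s ∧ z ≠ t ∧ (∃ S', Jmp c z S') ∧ Spr c s t z := by
    intro s hsV t htV hsS htS hst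
    obtain ⟨hsE, hsi, hsj, hsk⟩ := (hmemV s).mp hsV
    obtain ⟨htE, hti, htj, htk⟩ := (hmemV t).mp htV
    obtain ⟨z, hzE, hzs, hzt, hzjump, hzsep⟩ := hwc s hsE t htE hst
    have hzi : z ≠ i := by
      intro heq
      rw [heq] at hzsep
      have hiff := hzsep _ F2
      have hsX : s ∉ insert k (S.erase i) := by
        rw [hmemX i hiS s]
        push_neg
        exact ⟨hsk, fun h => absurd h hsS⟩
      have htX : t ∈ insert k (S.erase i) := by
        by_contra hnt
        exact hsX (hiff.mpr hnt)
      rw [hmemX i hiS t] at htX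
      rcases htX with rfl | ⟨h1, _⟩
      · exact htk rfl
      · exact htS h1
    have hzj : z ≠ j := by
      intro heq
      rw [heq] at hzsep
      have hiff := hzsep _ F3
      have : t ∈ S := by
        by_contra hnt
        exact hsS (hiff.mpr hnt)
      exact htS this
    have hzk : z ≠ k := by
      intro heq
      rw [heq] at hzsep
      have hiff := hzsep _ hjmp
      have : t ∈ S := by
        by_contra hnt
        exact hsS (hiff.mpr hnt)
      exact htS this
    have hznS : z ∉ S := by
      intro hzS
      have hiff := hzsep _ (F4 z hzS)
      have hsX : s ∉ insert k (S.erase z) := by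
        rw [hmemX z hzS s]
        push_neg
        exact ⟨hsk, fun h => absurd h hsS⟩
      have htX : t ∈ insert k (S.erase z) := by
        by_contra hnt
        exact hsX (hiff.mpr hnt)
      rw [hmemX z hzS t] at htX
      rcases htX with rfl | ⟨h1, _⟩
      · exact htk rfl
      · exact htS h1
    exact ⟨z, (hmemV z).mpr ⟨hzE, hzi, hzj, hzk⟩, hznS, hzs, hzt, hzjump, hzsep⟩
  set B : Finset α := V.filter (fun v => v ∉ S) with hB
  have hmemB : ∀ w, w ∈ B ↔ w ∈ V ∧ w ∉ S := by
    intro w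
    simp [hB]
  have hVne : V.Nonempty := by
    rw [← Finset.card_pos, hcardV]
    omega
  have hBne : B.Nonempty := by
    obtain ⟨l, hl⟩ := hVne
    by_cases hlS : l ∈ S
    · obtain ⟨z, hzV, hznS⟩ := F6 l hl hlS
      exact ⟨z, (hmemB z).mpr ⟨hzV, hznS⟩⟩
    · exact ⟨l, (hmemB l).mpr ⟨hl, hlS⟩⟩
  obtain ⟨s, hs⟩ := hBne
  obtain ⟨hsV, hsS⟩ := (hmemB s).mp hs
  obtain ⟨z₁, hz₁V, hz₁S, hz₁s, _, _⟩ := F5 s hsV hsS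
  have hz₁B : z₁ ∈ B := (hmemB z₁).mpr ⟨hz₁V, hz₁S⟩
  obtain ⟨z₂, hz₂V, hz₂S, hz₂z₁, hz₂s, _, _⟩ := F7 z₁ hz₁V s hsV hz₁S hsS hz₁s
  have hz₂B : z₂ ∈ B := (hmemB z₂).mpr ⟨hz₂V, hz₂S⟩
  set E₂ : Finset α := insert j B with hE₂
  have hjB : j ∉ B := by
    intro hjmem
    have := ((hmemB j).mp hjmem).1
    exact ((hmemV j).mp this).2.2.1 rfl
  have hwc₂ : WClosed c E₂ := by
    intro p' hp' q' hq' hne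
    rcases Finset.mem_insert.mp hp' with rfl | hp'B
    · rcases Finset.mem_insert.mp hq' with rfl | hq'B
      · exact absurd rfl hne
      · obtain ⟨hq'V, hq'S⟩ := (hmemB q').mp hq'B
        obtain ⟨z, hzV, hzS, hzq', hzjump, hzsep⟩ := F5 q' hq'V hq'S
        refine ⟨z, Finset.mem_insert_of_mem ((hmemB z).mpr ⟨hzV, hzS⟩), ?_, hzq', hzjump, hzsep⟩
        exact fun h => ((hmemV z).mp hzV).2.2.1 h
    · rcases Finset.mem_insert.mp hq' with rfl | hq'B
      · obtain ⟨hp'V, hp'S⟩ := (hmemB p').mp hp'B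
        obtain ⟨z, hzV, hzS, hzp', hzjump, hzsep⟩ := F5 p' hp'V hp'S
        refine ⟨z, Finset.mem_insert_of_mem ((hmemB z).mpr ⟨hzV, hzS⟩), hzp', ?_, hzjump,
          hzsep.symm⟩
        exact fun h => ((hmemV z).mp hzV).2.2.1 h
      · obtain ⟨hp'V, hp'S⟩ := (hmemB p').mp hp'B
        obtain ⟨hq'V, hq'S⟩ := (hmemB q').mp hq'B
        obtain ⟨z, hzV, hzS, hzp', hzq', hzjump, hzsep⟩ := F7 p' hp'V q' hq'V hp'S hq'S hne
        exact ⟨z, Finset.mem_insert_of_mem ((hmemB z).mpr ⟨hzV, hzS⟩), hzp', hzq', hzjump, hzsep⟩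
  have hns1 : z₁ ∉ ({z₂} : Finset α) := by
    rw [Finset.mem_singleton]
    exact fun h => hz₂z₁ h.symm
  have hns2 : s ∉ ({z₁, z₂} : Finset α) := by
    rw [Finset.mem_insert, Finset.mem_singleton]
    push_neg
    exact ⟨fun h => hz₁s h.symm, fun h => hz₂s h.symm⟩
  have hc3 : ({s, z₁, z₂} : Finset α).card = 3 := by
    rw [Finset.card_insert_of_notMem hns2, Finset.card_insert_of_notMem hns1,
      Finset.card_singleton]
  have h3 : ({s, z₁, z₂} : Finset α) ⊆ B := by
    intro w hw
    simp only [Finset.mem_insert, Finset.mem_singleton] at hw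
    rcases hw with rfl | rfl | rfl
    · exact hs
    · exact hz₁B
    · exact hz₂B
  have hBcard : 3 ≤ B.card := hc3 ▸ Finset.card_le_card h3
  have hE₂card : E₂.card = B.card + 1 := by
    rw [hE₂, Finset.card_insert_of_notMem hjB]
  have hE₂small : E₂.card < E₀.card := by
    have hBV : B ⊆ V := Finset.filter_subset _ _
    have := Finset.card_le_card hBV
    omega
  have := IH E₂ hE₂small hwc₂
  omega

theorem noBig {c : Finset α → β} (Mc : ∀ ⦃S T : Finset α⦄, S ⊆ T → c S ≤ c T) :
    ∀ (N : ℕ) (E₀ : Finset α), E₀.card ≤ N → WClosed c E₀ → E₀.card ≤ 3 := by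
  intro N
  induction N with
  | zero => intro E₀ h _; omega
  | succ N ihN =>
    intro E₀ hcard hwc
    by_contra hbig
    push_neg at hbig
    have hcard4 : 4 ≤ E₀.card := hbig
    have IH : ∀ E' : Finset α, E'.card < E₀.card → WClosed c E' → E'.card ≤ 3 := by
      intro E' hlt hwc'
      exact ihN E' (by omega) hwc'
    -- pick a minimal witness jump
    classical
    have hJne : {m | ∃ p ∈ E₀, ∃ q ∈ E₀, ∃ z ∈ E₀, p ≠ q ∧ z ≠ p ∧ z ≠ q ∧ Spr c p q z ∧
        ∃ S, Jmp c z S ∧ S.card = m}.Nonempty := by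
      obtain ⟨p, hp, q, hq, hpq⟩ := Finset.one_lt_card.mp (by omega : 1 < E₀.card)
      obtain ⟨z, hz, hzp, hzq, ⟨S, hS⟩, hsep⟩ := hwc p hp q hq hpq
      exact ⟨S.card, p, hp, q, hq, z, hz, hpq, hzp, hzq, hsep, S, hS, rfl⟩
    obtain ⟨p, hp, q, hq, z, hz, hpq, hzp, hzq, hsep, S, hS, hScard⟩ :=
      Nat.sInf_mem hJne
    have hmin : ∀ S', Jmp c z S' → S.card ≤ S'.card := by
      intro S' hS'
      rw [hScard]
      exact Nat.sInf_le ⟨p, hp, q, hq, z, hz, hpq, hzp, hzq, hsep, S', hS', rfl⟩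
    have hminK : ∀ l ∈ S, ¬ Jmp c z (S.erase l) := by
      intro l hl hjmp'
      have h1 := hmin _ hjmp'
      have h2 : (S.erase l).card = S.card - 1 := Finset.card_erase_of_mem hl
      have h3 : 1 ≤ S.card := Finset.card_pos.mpr ⟨l, hl⟩
      omega
    have hpar := hsep S hS
    by_cases hpS : p ∈ S
    · have hqS : q ∉ S := hpar.mp hpS
      exact absurd (key_lemma Mc E₀ hwc IH p q z S hp hq hz hpq hzp hzq hsep hS hpS hqS
        hminK hcard4) (fun h => h)
    · have hqS : q ∈ S := by
        by_contra hq'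
        exact hpS (hpar.mpr hq')
      have hpS' : p ∉ S := hpS
      exact absurd (key_lemma Mc E₀ hwc IH q p z S hq hp hz hpq.symm hzq hzp hsep.symm hS
        hqS hpS' hminK hcard4) (fun h => h)

end Combinatorial

namespace AGap

open Finset

variable {L : Type*} [DistribLattice L] [BoundedOrder L] {n : ℕ}

/-- characteristic tuple of a finset -/
def chi (S : Finset (Fin n)) : Fin n → L := fun v => if v ∈ S then ⊤ else ⊥

lemma chi_mono {S T : Finset (Fin n)} (h : S ⊆ T) : (chi S : Fin n → L) ≤ chi T := by
  intro v
  by_cases hv : v ∈ S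
  · simp [chi, hv, h hv]
  · simp [chi, hv]

/-- coefficients -/
def coef (f : (Fin n → L) → L) (S : Finset (Fin n)) : L := f (chi S)

lemma poly_mono {f : (Fin n → L) → L} (hf : IsLatPoly f) : Monotone f := by
  induction hf with
  | proj i => exact fun x y h => h i
  | const c => exact fun x y _ => le_rfl
  | inf hf hg ihf ihg => exact fun x y h => inf_le_inf (ihf h) (ihg h)
  | sup hf hg ihf ihg => exact fun x y h => sup_le_sup (ihf h) (ihg h)

lemma coef_mono {f : (Fin n → L) → L} (hf : IsLatPoly f) {S T : Finset (Fin n)}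
    (h : S ⊆ T) : coef f S ≤ coef f T := poly_mono hf (chi_mono h)

/-- disjunctive normal form -/
lemma mem_pw (S : Finset (Fin n)) : S ∈ (Finset.univ : Finset (Fin n)).powerset :=
  Finset.mem_powerset.mpr (Finset.subset_univ S)

lemma poly_nf {f : (Fin n → L) → L} (hf : IsLatPoly f) (x : Fin n → L) :
    f x = (Finset.univ.powerset).sup (fun S => coef f S ⊓ S.inf x) := by
  induction hf with
  | proj i =>
    show x i = _
    apply le_antisymm
    · have : x i = coef (fun y => y i) {i} ⊓ ({i} : Finset (Fin n)).inf x := by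
        simp [coef, chi]
      rw [this]
      exact Finset.le_sup (f := fun S => coef (fun y : Fin n → L => y i) S ⊓ S.inf x) (mem_pw _)
    · apply Finset.sup_le
      intro S _
      by_cases hi : i ∈ S
      · calc coef (fun y => y i) S ⊓ S.inf x ≤ S.inf x := inf_le_right
          _ ≤ x i := Finset.inf_le hi
      · simp [coef, chi, hi]
  | const c =>
    show c = _
    apply le_antisymm
    · have : c = coef (fun _ : Fin n → L => c) ∅ ⊓ (∅ : Finset (Fin n)).inf x := by simp [coef]
      exact le_trans (le_of_eq this)
        (Finset.le_sup (f := fun S => coef (fun _ : Fin n → L => c) S ⊓ S.inf x) (mem_pw _))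
    · apply Finset.sup_le
      intro S _
      exact inf_le_left
  | @inf f g hf hg ihf ihg =>
    show f x ⊓ g x = _
    rw [ihf, ihg, Finset.sup_inf_distrib_right]
    apply le_antisymm
    · apply Finset.sup_le
      intro S hS
      rw [Finset.sup_inf_distrib_left]
      apply Finset.sup_le
      intro T hT
      have key : coef f S ⊓ S.inf x ⊓ (coef g T ⊓ T.inf x)
          ≤ coef (fun y => f y ⊓ g y) (S ∪ T) ⊓ (S ∪ T).inf x := by
        have h1 : coef f S ⊓ S.inf x ⊓ (coef g T ⊓ T.inf x)
            = (coef f S ⊓ coef g T) ⊓ ((S ∪ T).inf x) := by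
          rw [Finset.inf_union]
          ac_rfl
        rw [h1]
        apply inf_le_inf_right
        have : coef (fun y => f y ⊓ g y) (S ∪ T) = coef f (S ∪ T) ⊓ coef g (S ∪ T) := rfl
        rw [this]
        exact inf_le_inf (coef_mono hf Finset.subset_union_left)
          (coef_mono hg Finset.subset_union_right)
      exact le_trans key (Finset.le_sup (f := fun S => coef (fun y => f y ⊓ g y) S ⊓ S.inf x) (mem_pw _))
    · apply Finset.sup_le
      intro S hS
      have h1 : coef (fun y => f y ⊓ g y) S ⊓ S.inf x
          ≤ (coef f S ⊓ S.inf x) ⊓ (coef g S ⊓ S.inf x) := by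
        have : coef (fun y => f y ⊓ g y) S = coef f S ⊓ coef g S := rfl
        rw [this]
        refine le_inf ?_ ?_
        · exact inf_le_inf_right _ inf_le_left
        · exact inf_le_inf_right _ inf_le_right
      refine le_trans h1 ?_
      have h2 : (coef f S ⊓ S.inf x) ⊓ (coef g S ⊓ S.inf x)
          ≤ (coef f S ⊓ S.inf x) ⊓ Finset.univ.powerset.sup (fun T => coef g T ⊓ T.inf x) :=
        inf_le_inf_left _ (Finset.le_sup (f := fun T => coef g T ⊓ T.inf x) hS)
      exact le_trans h2 (Finset.le_sup
        (f := fun U => (coef f U ⊓ U.inf x) ⊓ Finset.univ.powerset.sup fun T => coef g T ⊓ T.inf x) hS)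
  | @sup f g hf hg ihf ihg =>
    show f x ⊔ g x = _
    rw [ihf, ihg]
    apply le_antisymm
    · have hterm : ∀ S, coef f S ⊔ coef g S = coef (fun y => f y ⊔ g y) S := fun S => rfl
      apply sup_le
      · refine Finset.sup_le fun S hS => le_trans ?_ (Finset.le_sup (f := fun S => coef (fun y => f y ⊔ g y) S ⊓ S.inf x) hS)
        exact inf_le_inf_right _ (le_trans le_sup_left (le_of_eq (hterm S)))
      · refine Finset.sup_le fun S hS => le_trans ?_ (Finset.le_sup (f := fun S => coef (fun y => f y ⊔ g y) S ⊓ S.inf x) hS)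
        exact inf_le_inf_right _ (le_trans le_sup_right (le_of_eq (hterm S)))
    · apply Finset.sup_le
      intro S hS
      have : coef (fun y => f y ⊔ g y) S = coef f S ⊔ coef g S := rfl
      rw [this, inf_sup_right]
      exact sup_le_sup (Finset.le_sup (f := fun S => coef f S ⊓ S.inf x) hS)
        (Finset.le_sup (f := fun S => coef g S ⊓ S.inf x) hS)


lemma not_essential_iff {A B : Type*} {g : (Fin n → A) → B} {v : Fin n} :
    ¬EssentialAt g v ↔ ∀ a b, g (Function.update a v b) = g a := by
  unfold EssentialAt
  push_neg
  rfl

lemma chi_update_top (S : Finset (Fin n)) (v : Fin n) :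
    Function.update (chi S : Fin n → L) v ⊤ = chi (insert v S) := by
  funext w
  by_cases hw : w = v
  · subst hw; simp [chi]
  · simp [chi, Function.update_of_ne hw, hw]

lemma chi_update_bot (S : Finset (Fin n)) (v : Fin n) :
    Function.update (chi S : Fin n → L) v ⊥ = chi (S.erase v) := by
  funext w
  by_cases hw : w = v
  · subst hw; simp [chi]
  · simp [chi, Function.update_of_ne hw, hw]

lemma essential_of_coef {f : (Fin n → L) → L} {v : Fin n} {X : Finset (Fin n)}
    (hvX : v ∉ X) (hne : coef f X ≠ coef f (insert v X)) : EssentialAt f v := by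
  refine ⟨chi X, ⊤, ?_⟩
  rw [chi_update_top]
  exact hne.symm

lemma essential_iff_coef {f : (Fin n → L) → L} (hf : IsLatPoly f) (v : Fin n) :
    EssentialAt f v ↔ ∃ X, v ∉ X ∧ coef f X ≠ coef f (insert v X) := by
  constructor
  · intro hv
    by_contra hcon
    push_neg at hcon
    have hcoef : ∀ X : Finset (Fin n), v ∉ X → coef f X = coef f (insert v X) := by
      intro X hX
      by_contra hne
      exact hne (hcon X hX)
    have key : ∀ x : Fin n → L, f x =
        (Finset.univ.powerset.filter (fun S => v ∉ S)).sup (fun S => coef f S ⊓ S.inf x) := by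
      intro x
      rw [poly_nf hf x]
      apply le_antisymm
      · apply Finset.sup_le
        intro S _
        by_cases hvS : v ∈ S
        · have h1 : coef f S = coef f (S.erase v) := by
            rw [hcoef (S.erase v) (Finset.notMem_erase v S), Finset.insert_erase hvS]
          have h2 : S.inf x ≤ (S.erase v).inf x :=
            Finset.inf_mono (Finset.erase_subset v S)
          refine le_trans (inf_le_inf (le_of_eq h1) h2) ?_
          exact Finset.le_sup (f := fun S => coef f S ⊓ S.inf x)
            (Finset.mem_filter.mpr ⟨mem_pw _, Finset.notMem_erase v S⟩)
        · exact Finset.le_sup (f := fun S => coef f S ⊓ S.inf x)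
            (Finset.mem_filter.mpr ⟨mem_pw _, hvS⟩)
      · exact Finset.sup_mono (Finset.filter_subset _ _)
    obtain ⟨a, b, hab⟩ := hv
    apply hab
    rw [key a, key (Function.update a v b)]
    apply Finset.sup_congr rfl
    intro S hS
    have hvS : v ∉ S := (Finset.mem_filter.mp hS).2
    congr 1
    apply Finset.inf_congr rfl
    intro w hw
    have hwv : w ≠ v := by
      intro h
      rw [h] at hw
      exact hvS hw
    exact Function.update_of_ne hwv b a
  · rintro ⟨X, hvX, hne⟩
    exact essential_of_coef hvX hne

lemma idMinor_poly {f : (Fin n → L) → L} (hf : IsLatPoly f) (p q : Fin n) :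
    IsLatPoly (idMinor f p q) := by
  induction hf with
  | proj l =>
    by_cases hl : l = p
    · subst hl
      have : idMinor (fun x : Fin n → L => x l) l q = fun x => x q := by
        funext x; simp [idMinor]
      rw [this]; exact IsLatPoly.proj q
    · have : idMinor (fun x : Fin n → L => x l) p q = fun x => x l := by
        funext x; simp [idMinor, Function.update_of_ne hl]
      rw [this]; exact IsLatPoly.proj l
  | const c => exact IsLatPoly.const c
  | inf hf hg ihf ihg => exact IsLatPoly.inf ihf ihg
  | sup hf hg ihf ihg => exact IsLatPoly.sup ihf ihg

lemma minor_not_essential_self {f : (Fin n → L) → L} {p q : Fin n} (hpq : p ≠ q) :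
    ¬ EssentialAt (idMinor f p q) p := by
  rw [not_essential_iff]
  intro a b
  unfold idMinor
  rw [Function.update_of_ne hpq.symm, Function.update_idem]

lemma minor_not_essential_other {A B : Type*} {f : (Fin n → A) → B} {p q l : Fin n}
    (hl : ¬EssentialAt f l) (hlp : l ≠ p) (hlq : l ≠ q) :
    ¬ EssentialAt (idMinor f p q) l := by
  rw [not_essential_iff] at hl ⊢
  intro a b
  unfold idMinor
  rw [Function.update_of_ne hlq.symm, Function.update_comm hlp]
  exact hl _ b

lemma coef_minor_mem {f : (Fin n → L) → L} {p q : Fin n} {X : Finset (Fin n)} (hq : q ∈ X) :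
    coef (idMinor f p q) X = coef f (insert p X) := by
  unfold coef idMinor
  have h1 : chi (L := L) X q = ⊤ := by simp [chi, hq]
  rw [h1, chi_update_top]

lemma coef_minor_notMem {f : (Fin n → L) → L} {p q : Fin n} {X : Finset (Fin n)} (hq : q ∉ X) :
    coef (idMinor f p q) X = coef f (X.erase p) := by
  unfold coef idMinor
  have h1 : chi (L := L) X q = ⊥ := by simp [chi, hq]
  rw [h1, chi_update_bot]

/-- the third variable r dies when identifying p and q -/
def Dead (f : (Fin n → L) → L) (p q r : Fin n) : Prop :=
  ∀ X : Finset (Fin n), p ∉ X → q ∉ X → r ∉ X →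
    (coef f X = coef f (insert r X) ∧
     coef f (insert p (insert q X)) = coef f (insert r (insert p (insert q X))))

lemma essential_minor_of_not_dead {f : (Fin n → L) → L} {p q r : Fin n}
    (hrq : r ≠ q) (hrp : r ≠ p) (hnd : ¬ Dead f p q r) :
    EssentialAt (idMinor f p q) r := by
  unfold Dead at hnd
  push_neg at hnd
  obtain ⟨X, hpX, hqX, hrX, hne⟩ := hnd
  by_cases h1 : coef f X = coef f (insert r X)
  · have h2 := hne h1
    apply essential_of_coef (f := idMinor f p q)
      (X := insert q X) (by simp [hrq, hrX])
    rw [coef_minor_mem (Finset.mem_insert_self q X),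
      coef_minor_mem (by simp : q ∈ insert r (insert q X))]
    rw [show insert p (insert r (insert q X)) = insert r (insert p (insert q X)) by
      rw [Finset.insert_comm p r (insert q X)]]
    exact h2
  · apply essential_of_coef (f := idMinor f p q) hrX
    rw [coef_minor_notMem hqX, coef_minor_notMem (by simp [hrq.symm, hqX] : q ∉ insert r X),
      Finset.erase_eq_of_notMem hpX,
      Finset.erase_eq_of_notMem (by simp [hrp.symm, hpX] : p ∉ insert r X)]
    exact h1

lemma not_essential_minor_of_dead {f : (Fin n → L) → L} (hf : IsLatPoly f) {p q r : Fin n}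
    (hd : Dead f p q r) (hpq : p ≠ q) (hrp : r ≠ p) (hrq : r ≠ q) :
    ¬ EssentialAt (idMinor f p q) r := by
  rw [essential_iff_coef (idMinor_poly hf p q)]
  rintro ⟨X, hrX, hne⟩
  apply hne
  by_cases hqX : q ∈ X
  · rw [coef_minor_mem hqX, coef_minor_mem (Finset.mem_insert_of_mem hqX)]
    have h0 : insert q ((X.erase q).erase p) = X.erase p := by
      rw [Finset.erase_right_comm, Finset.insert_erase (Finset.mem_erase.mpr ⟨hpq.symm, hqX⟩)]
    have h1 : insert p (X.erase p) = insert p X := by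
      ext w; simp only [Finset.mem_insert, Finset.mem_erase]; tauto
    have hd2 := (hd ((X.erase q).erase p) (Finset.notMem_erase p _)
      (fun hmem => Finset.notMem_erase q X (Finset.mem_of_mem_erase hmem))
      (fun hmem => hrX (Finset.mem_of_mem_erase (Finset.mem_of_mem_erase hmem)))).2
    rw [h0, h1] at hd2
    rw [hd2]
    congr 1
    rw [Finset.insert_comm]
  · rw [coef_minor_notMem hqX,
      coef_minor_notMem (by simp [hrq.symm, hqX] : q ∉ insert r X)]
    have h2 : (insert r X).erase p = insert r (X.erase p) := by
      ext w
      simp only [Finset.mem_insert, Finset.mem_erase]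
      constructor
      · rintro ⟨hwp, hw | hw⟩
        · exact Or.inl hw
        · exact Or.inr ⟨hwp, hw⟩
      · rintro (rfl | ⟨hwp, hw⟩)
        · exact ⟨hrp, Or.inl rfl⟩
        · exact ⟨hwp, Or.inr hw⟩
    rw [h2]
    exact (hd (X.erase p) (Finset.notMem_erase p X)
      (fun hmem => hqX (Finset.mem_of_mem_erase hmem))
      (fun hmem => hrX (Finset.mem_of_mem_erase hmem))).1


lemma essential_minor_partner {f : (Fin n → L) → L} (hf : IsLatPoly f) {p q : Fin n}
    (hq : EssentialAt f q) : EssentialAt (idMinor f p q) q := by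
  rw [essential_iff_coef hf] at hq
  obtain ⟨X, hqX, hne⟩ := hq
  have hlt : coef f X < coef f (insert q X) :=
    lt_of_le_of_ne (coef_mono hf (Finset.subset_insert q X)) hne
  by_cases hpX : p ∈ X
  · have hqX₀ : q ∉ X.erase p := fun hm => hqX (Finset.mem_of_mem_erase hm)
    apply essential_of_coef (f := idMinor f p q) (X := X.erase p) hqX₀
    rw [coef_minor_notMem hqX₀, coef_minor_mem (Finset.mem_insert_self q (X.erase p))]
    have e1 : (X.erase p).erase p = X.erase p :=
      Finset.erase_eq_of_notMem (Finset.notMem_erase p X)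
    have e2 : insert p (insert q (X.erase p)) = insert q X := by
      ext w
      simp only [Finset.mem_insert, Finset.mem_erase]
      constructor
      · rintro (rfl | rfl | ⟨_, hw⟩)
        · exact Or.inr hpX
        · exact Or.inl rfl
        · exact Or.inr hw
      · rintro (rfl | hw)
        · exact Or.inr (Or.inl rfl)
        · by_cases hwp : w = p
          · exact Or.inl hwp
          · exact Or.inr (Or.inr ⟨hwp, hw⟩)
    rw [e1, e2]
    exact ne_of_lt (lt_of_le_of_lt (coef_mono hf (Finset.erase_subset p X)) hlt)
  · apply essential_of_coef (f := idMinor f p q) (X := X) hqX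
    rw [coef_minor_notMem hqX, coef_minor_mem (Finset.mem_insert_self q X),
      Finset.erase_eq_of_notMem hpX]
    exact ne_of_lt (lt_of_lt_of_le hlt (coef_mono hf (Finset.subset_insert p (insert q X))))

lemma dead_spr {f : (Fin n → L) → L} {p q r : Fin n} (hpq : p ≠ q)
    (hd : Dead f p q r) : Spr (coef f) p q r := by
  intro S hS
  by_contra hiff
  have hcases : (p ∈ S ∧ q ∈ S) ∨ (p ∉ S ∧ q ∉ S) := by tauto
  have hrS : r ∉ S := hS.1
  rcases hcases with ⟨hp, hq⟩ | ⟨hp, hq⟩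
  · have hpX₀ : p ∉ (S.erase p).erase q := fun hm =>
      Finset.notMem_erase p S (Finset.mem_of_mem_erase hm)
    have hqX₀ : q ∉ (S.erase p).erase q := Finset.notMem_erase q _
    have hrX₀ : r ∉ (S.erase p).erase q := fun hm =>
      hrS (Finset.mem_of_mem_erase (Finset.mem_of_mem_erase hm))
    have h2 := (hd _ hpX₀ hqX₀ hrX₀).2
    have e1 : insert q ((S.erase p).erase q) = S.erase p :=
      Finset.insert_erase (Finset.mem_erase.mpr ⟨hpq.symm, hq⟩)
    have e2 : insert p (S.erase p) = S := Finset.insert_erase hp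
    rw [e1, e2] at h2
    exact hS.2 h2
  · exact hS.2 ((hd S hp hq hrS).1)

lemma essential_iff_jmp {f : (Fin n → L) → L} (hf : IsLatPoly f) (v : Fin n) :
    EssentialAt f v ↔ ∃ S, Jmp (coef f) v S := by
  rw [essential_iff_coef hf]
  rfl

open Classical in
noncomputable def essFinset (f : (Fin n → L) → L) : Finset (Fin n) :=
  Finset.univ.filter (fun v => EssentialAt f v)

lemma mem_essFinset {f : (Fin n → L) → L} {v : Fin n} :
    v ∈ essFinset f ↔ EssentialAt f v := by
  classical
  simp [essFinset]

lemma essArity_eq (f : (Fin n → L) → L) : essArity f = (essFinset f).card := by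
  unfold essArity
  have h : {j | EssentialAt f j} = ↑(essFinset f) := by
    ext v
    simp [mem_essFinset]
  rw [h, Set.ncard_coe_finset]

lemma minor_ess_subset {f : (Fin n → L) → L} {p q : Fin n} (hpq : p ≠ q)
    (hq : EssentialAt f q) :
    essFinset (idMinor f p q) ⊆ (essFinset f).erase p := by
  intro l hl
  rw [mem_essFinset] at hl
  have hlp : l ≠ p := by
    rintro rfl
    exact minor_not_essential_self hpq hl
  rw [Finset.mem_erase, mem_essFinset]
  refine ⟨hlp, ?_⟩
  by_cases hlq : l = q
  · subst hlq; exact hq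
  · by_contra hless
    exact minor_not_essential_other hless hlp hlq hl

lemma shape1 (u v : L) : ((u ⊓ u) ⊔ (u ⊓ v)) ⊔ (v ⊓ u) = u := by
  rw [inf_idem]
  apply le_antisymm
  · exact sup_le (sup_le le_rfl inf_le_left) inf_le_right
  · exact le_sup_of_le_left le_sup_left

lemma shape2 (u v : L) : ((v ⊓ u) ⊔ (u ⊓ v)) ⊔ (v ⊓ v) = v := by
  rw [inf_idem]
  apply le_antisymm
  · exact sup_le (sup_le inf_le_left inf_le_right) le_rfl
  · exact le_sup_right

lemma shape3 (u v : L) : ((u ⊓ v) ⊔ (v ⊓ v)) ⊔ (v ⊓ u) = v := by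
  rw [inf_idem]
  apply le_antisymm
  · exact sup_le (sup_le inf_le_right le_rfl) inf_le_left
  · exact le_sup_of_le_left le_sup_right

/-- From the median structure, the arity gap is 2. -/
lemma gapOfMed {f : (Fin n → L) → L} (a b : L) (i j k : Fin n) (hab : a < b)
    (hij : i ≠ j) (hjk : j ≠ k) (hik : i ≠ k)
    (hEi : EssentialAt f i) (hEj : EssentialAt f j) (hEk : EssentialAt f k)
    (hoth : ∀ l : Fin n, l ≠ i → l ≠ j → l ≠ k → ¬ EssentialAt f l)
    (hform : ∀ x : Fin n → L,
      f x = (a ⊔ ((x i ⊓ x j) ⊔ (x j ⊓ x k) ⊔ (x k ⊓ x i))) ⊓ b) :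
    arityGap f = 2 := by
  classical
  have hEF : essFinset f = {i, j, k} := by
    ext v
    rw [mem_essFinset]
    simp only [Finset.mem_insert, Finset.mem_singleton]
    constructor
    · intro hv
      by_contra hcon
      push_neg at hcon
      exact hoth v hcon.1 hcon.2.1 hcon.2.2 hv
    · rintro (rfl | rfl | rfl)
      · exact hEi
      · exact hEj
      · exact hEk
  have hcard3 : (essFinset f).card = 3 := by
    rw [hEF, Finset.card_insert_of_notMem (by simp [hij, hik]),
      Finset.card_insert_of_notMem (by simp [hjk]), Finset.card_singleton]
  have hm : essArity f = 3 := by rw [essArity_eq, hcard3]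
  -- minors
  have hminorform : ∀ p q : Fin n, p ≠ q → (p = i ∨ p = j ∨ p = k) →
      (q = i ∨ q = j ∨ q = k) → ∀ x : Fin n → L,
      idMinor f p q x = (a ⊔ x q) ⊓ b := by
    intro p q hpq hp hq x
    unfold idMinor
    rw [hform]
    have hyp : Function.update x p (x q) p = x q := by simp
    have hyo : ∀ w, w ≠ p → Function.update x p (x q) w = x w := by
      intro w hw
      exact Function.update_of_ne hw _ _
    rcases hp with hp | hp | hp <;> obtain rfl := hp.symm <;>
      rcases hq with hq | hq | hq <;> obtain rfl := hq.symm
    · exact absurd rfl hpq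
    · rw [hyp, hyo j (Ne.symm hij), hyo k (Ne.symm hik), shape1]
    · rw [hyp, hyo j (Ne.symm hij), hyo k (Ne.symm hik), shape2]
    · rw [hyp, hyo i hij, hyo k (Ne.symm hjk), shape1]
    · exact absurd rfl hpq
    · rw [hyp, hyo i hij, hyo k (Ne.symm hjk), shape3]
    · rw [hyp, hyo i hik, hyo j hjk, shape2]
    · rw [hyp, hyo i hik, hyo j hjk, shape3]
    · exact absurd rfl hpq
  have hminorarity : ∀ p q : Fin n, p ≠ q → (p = i ∨ p = j ∨ p = k) →
      (q = i ∨ q = j ∨ q = k) → essArity (idMinor f p q) = 1 := by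
    intro p q hpq hp hq
    have hmf := hminorform p q hpq hp hq
    have hEq' : EssentialAt (idMinor f p q) q := by
      refine ⟨fun _ => ⊥, ⊤, ?_⟩
      rw [hmf, hmf]
      simp only [Function.update_self, sup_top_eq, top_inf_eq, sup_bot_eq]
      rw [inf_eq_left.mpr hab.le]
      exact hab.ne'
    have hother : ∀ l, l ≠ q → ¬ EssentialAt (idMinor f p q) l := by
      intro l hlq
      rw [not_essential_iff]
      intro x v
      rw [hmf, hmf, Function.update_of_ne hlq.symm]
    have : essFinset (idMinor f p q) = {q} := by
      ext v
      rw [mem_essFinset, Finset.mem_singleton]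
      constructor
      · intro hv
        by_contra hvq
        exact hother v hvq hv
      · rintro rfl
        exact hEq'
    rw [essArity_eq, this, Finset.card_singleton]
  -- the defining set of the arity gap
  have hset : {d | ∃ p q, p ≠ q ∧ EssentialAt f p ∧ EssentialAt f q ∧
      d = essArity f - essArity (idMinor f p q)} = {2} := by
    ext d
    simp only [Set.mem_setOf_eq, Set.mem_singleton_iff]
    constructor
    · rintro ⟨p, q, hpq, hp, hq, rfl⟩
      have hpm : p = i ∨ p = j ∨ p = k := by
        have := mem_essFinset.mpr hp
        rw [hEF] at this
        simpa using this
      have hqm : q = i ∨ q = j ∨ q = k := by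
        have := mem_essFinset.mpr hq
        rw [hEF] at this
        simpa using this
      rw [hm, hminorarity p q hpq hpm hqm]
    · rintro rfl
      exact ⟨i, j, hij, hEi, hEj, by
        rw [hm, hminorarity i j hij (Or.inl rfl) (Or.inr (Or.inl rfl))]⟩
  rw [arityGap, hset]
  have h2 : (2 : ℕ) ∈ ({2} : Set ℕ) := rfl
  have := Nat.sInf_mem (⟨2, h2⟩ : ({2} : Set ℕ).Nonempty)
  simpa using this

lemma coef_strip {f : (Fin n → L) → L} (hf : IsLatPoly f) (K : Finset (Fin n))
    (honly : ∀ l, l ∉ K → ¬ EssentialAt f l) : ∀ S, coef f S = coef f (S ∩ K) := by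
  have haux : ∀ (N : ℕ) (S : Finset (Fin n)), S.card ≤ N → coef f S = coef f (S ∩ K) := by
    intro N
    induction N with
    | zero =>
      intro S hS
      have : S = ∅ := Finset.card_eq_zero.mp (by omega)
      subst this
      rw [Finset.empty_inter]
    | succ N ihN =>
      intro S hS
      by_cases hsub : S ⊆ K
      · rw [Finset.inter_eq_left.mpr hsub]
      · obtain ⟨l, hlS, hlK⟩ := Finset.not_subset.mp hsub
        have hno := honly l hlK
        rw [essential_iff_coef hf] at hno
        push_neg at hno
        have h1 : coef f (S.erase l) = coef f (insert l (S.erase l)) :=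
          hno (S.erase l) (Finset.notMem_erase l S)
        have h2 : insert l (S.erase l) = S := Finset.insert_erase hlS
        have h3 : (S.erase l) ∩ K = S ∩ K := by
          ext w
          simp only [Finset.mem_inter, Finset.mem_erase]
          constructor
          · rintro ⟨⟨_, hwS⟩, hwK⟩
            exact ⟨hwS, hwK⟩
          · rintro ⟨hwS, hwK⟩
            refine ⟨⟨?_, hwS⟩, hwK⟩
            intro hwl
            exact hlK (hwl ▸ hwK)
        have h4 : (S.erase l).card ≤ N := by
          rw [Finset.card_erase_of_mem hlS]
          omega
        calc coef f S = coef f (insert l (S.erase l)) := by rw [h2]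
          _ = coef f (S.erase l) := h1.symm
          _ = coef f ((S.erase l) ∩ K) := ihN _ h4
          _ = coef f (S ∩ K) := by rw [h3]
  exact fun S => haux S.card S le_rfl

end AGap
open AGap in
theorem arity_gap_of_lattice_polynomial {L : Type*} [DistribLattice L] [BoundedOrder L]
    {n : ℕ} {f : (Fin n → L) → L} (hf : IsLatPoly f) (hess : 2 ≤ essArity f) :
    (arityGap f = 1 ∨ arityGap f = 2) ∧
      (arityGap f = 2 ↔
        ∃ (a b : L) (i j k : Fin n), a < b ∧ i ≠ j ∧ j ≠ k ∧ i ≠ k ∧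
          EssentialAt f i ∧ EssentialAt f j ∧ EssentialAt f k ∧
          (∀ l : Fin n, l ≠ i → l ≠ j → l ≠ k → ¬ EssentialAt f l) ∧
          ∀ x : Fin n → L,
            f x = (a ⊔ ((x i ⊓ x j) ⊔ (x j ⊓ x k) ⊔ (x k ⊓ x i))) ⊓ b) := by
  classical
  have Mc : ∀ ⦃S T : Finset (Fin n)⦄, S ⊆ T → coef f S ≤ coef f T :=
    fun S T h => coef_mono hf h
  have hm2 : 2 ≤ (essFinset f).card := by rw [← essArity_eq]; exact hess
  have hge1 : ∀ d ∈ {d | ∃ i j, i ≠ j ∧ EssentialAt f i ∧ EssentialAt f j ∧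
      d = essArity f - essArity (idMinor f i j)}, 1 ≤ d := by
    rintro d ⟨p, q, hpq, hp, hq, rfl⟩
    have hsub := minor_ess_subset hpq hq
    have h1 := Finset.card_le_card hsub
    rw [Finset.card_erase_of_mem (mem_essFinset.mpr hp)] at h1
    rw [essArity_eq f, essArity_eq (idMinor f p q)]
    omega
  by_cases hH : ∀ p q : Fin n, EssentialAt f p → EssentialAt f q → p ≠ q →
      ∃ r, EssentialAt f r ∧ r ≠ p ∧ r ≠ q ∧ Dead f p q r
  · -- the gap-2 case
    have hwcE : WClosed (coef f) (essFinset f) := by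
      intro p hp q hq hpq
      obtain ⟨r, hEr, hrp, hrq, hDead⟩ := hH p q (mem_essFinset.mp hp) (mem_essFinset.mp hq) hpq
      exact ⟨r, mem_essFinset.mpr hEr, hrp, hrq, (essential_iff_jmp hf r).mp hEr,
        dead_spr hpq hDead⟩
    have hcard_le3 : (essFinset f).card ≤ 3 :=
      noBig Mc (essFinset f).card (essFinset f) le_rfl hwcE
    have hcard_ne2 : (essFinset f).card ≠ 2 := by
      intro h2
      obtain ⟨p, q, hpq, hpq_eq⟩ := Finset.card_eq_two.mp h2
      have hp : EssentialAt f p := mem_essFinset.mp (by rw [hpq_eq]; simp)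
      have hq : EssentialAt f q := mem_essFinset.mp (by rw [hpq_eq]; simp)
      obtain ⟨r, hEr, hrp, hrq, _⟩ := hH p q hp hq hpq
      have hmem : r ∈ essFinset f := mem_essFinset.mpr hEr
      rw [hpq_eq] at hmem
      simp only [Finset.mem_insert, Finset.mem_singleton] at hmem
      tauto
    have hcard3 : (essFinset f).card = 3 := by omega
    obtain ⟨i, j, k, hij, hik, hjk, hEFeq⟩ := Finset.card_eq_three.mp hcard3
    have hEi : EssentialAt f i := mem_essFinset.mp (by rw [hEFeq]; simp)
    have hEj : EssentialAt f j := mem_essFinset.mp (by rw [hEFeq]; simp)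
    have hEk : EssentialAt f k := mem_essFinset.mp (by rw [hEFeq]; simp)
    set K : Finset (Fin n) := {i, j, k} with hK
    have hmemK : ∀ w, w ∈ K ↔ (w = i ∨ w = j ∨ w = k) := by
      intro w
      simp [hK]
    have honly : ∀ l, l ∉ K → ¬ EssentialAt f l := by
      intro l hl hE
      have := mem_essFinset.mpr hE
      rw [hEFeq] at this
      exact hl this
    have hoth : ∀ l : Fin n, l ≠ i → l ≠ j → l ≠ k → ¬ EssentialAt f l := by
      intro l h1 h2 h3
      apply honly
      rw [hmemK]
      push_neg
      exact ⟨h1, h2, h3⟩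
    -- pinned Dead facts
    have hgetDead : ∀ p q r0 : Fin n, EssentialAt f p → EssentialAt f q → p ≠ q →
        (∀ r, EssentialAt f r → r ≠ p → r ≠ q → r = r0) → Dead f p q r0 := by
      intro p q r0 hp hq hpq huniq
      obtain ⟨r, hEr, hrp, hrq, hD⟩ := hH p q hp hq hpq
      rwa [huniq r hEr hrp hrq] at hD
    have hwitK : ∀ r, EssentialAt f r → (r = i ∨ r = j ∨ r = k) := by
      intro r hEr
      have hmem := mem_essFinset.mpr hEr
      rw [hEFeq] at hmem
      exact (hmemK r).mp hmem
    have Dij : Dead f i j k :=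
      hgetDead i j k hEi hEj hij (fun r hEr hrp hrq => by
        rcases hwitK r hEr with h | h | h
        · exact absurd h hrp
        · exact absurd h hrq
        · exact h)
    have Dik : Dead f i k j :=
      hgetDead i k j hEi hEk hik (fun r hEr hrp hrq => by
        rcases hwitK r hEr with h | h | h
        · exact absurd h hrp
        · exact h
        · exact absurd h hrq)
    have Djk : Dead f j k i :=
      hgetDead j k i hEj hEk hjk (fun r hEr hrp hrq => by
        rcases hwitK r hEr with h | h | h
        · exact h
        · exact absurd h hrp
        · exact absurd h hrq)
    have sij : Spr (coef f) i j k := dead_spr hij Dij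
    have sik : Spr (coef f) i k j := dead_spr hik Dik
    have sjk : Spr (coef f) j k i := dead_spr hjk Djk
    have hstrip : ∀ S, coef f S = coef f (S ∩ K) := coef_strip hf K honly
    have hv : ∀ (p q z : Fin n) (X : Finset (Fin n)), Spr (coef f) p q z → z ∉ X →
        ¬(p ∈ X ↔ q ∉ X) → coef f X = coef f (insert z X) := by
      intro p q z X hspr hzX hiff
      by_contra hne
      exact hiff (hspr X ⟨hzX, hne⟩)
    -- singleton values
    have hinsi : insert i (∅ : Finset (Fin n)) = {i} := by ext w; simp
    have hinsj : insert j (∅ : Finset (Fin n)) = {j} := by ext w; simp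
    have hinsk : insert k (∅ : Finset (Fin n)) = {k} := by ext w; simp
    have hvi : coef f {i} = coef f ∅ := by
      have h := hv j k i ∅ sjk (Finset.notMem_empty i) (by simp)
      rw [hinsi] at h
      exact h.symm
    have hvj : coef f {j} = coef f ∅ := by
      have h := hv i k j ∅ sik (Finset.notMem_empty j) (by simp)
      rw [hinsj] at h
      exact h.symm
    have hvk : coef f {k} = coef f ∅ := by
      have h := hv i j k ∅ sij (Finset.notMem_empty k) (by simp)
      rw [hinsk] at h
      exact h.symm
    -- pair values
    have hvij : coef f {i, j} = coef f K := by
      have h := hv i j k {i, j} sij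
        (by simp [Ne.symm hik, Ne.symm hjk])
        (by simp)
      have hs : insert k ({i, j} : Finset (Fin n)) = K := by
        ext w
        rw [hmemK] <;> simp only [Finset.mem_insert, Finset.mem_singleton] <;> tauto
      rw [h, hs]
    have hvik : coef f {i, k} = coef f K := by
      have h := hv i k j {i, k} sik
        (by simp [Ne.symm hij, hjk])
        (by simp)
      have hs : insert j ({i, k} : Finset (Fin n)) = K := by
        ext w
        rw [hmemK] <;> simp only [Finset.mem_insert, Finset.mem_singleton] <;> tauto
      rw [h, hs]
    have hvjk : coef f {j, k} = coef f K := by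
      have h := hv j k i {j, k} sjk
        (by simp [hij, hik])

        (by simp)
      have hs : insert i ({j, k} : Finset (Fin n)) = K := by
        ext w
        rw [hmemK] <;> simp only [Finset.mem_insert, Finset.mem_singleton] <;> tauto
      rw [h, hs]
    -- a < b
    have hab : coef f ∅ < coef f K := by
      obtain ⟨X, hjmp⟩ := (essential_iff_jmp hf k).mp hEk
      have hpar := sij X hjmp
      have hkX : k ∉ X := hjmp.1
      refine lt_of_le_of_ne (Mc (Finset.empty_subset K)) ?_
      intro habeq
      apply hjmp.2
      by_cases hiX : i ∈ X
      · have hjX : j ∉ X := hpar.mp hiX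
        have e1 : X ∩ K = {i} := by
          ext w
          simp only [Finset.mem_inter, hmemK, Finset.mem_singleton]
          constructor
          · rintro ⟨hwX, hw | hw | hw⟩
            · exact hw
            · exact absurd (hw ▸ hwX) hjX
            · exact absurd (hw ▸ hwX) hkX
          · intro hw
            exact ⟨hw.symm ▸ hiX, Or.inl hw⟩
        have e2 : (insert k X) ∩ K = {i, k} := by
          ext w
          simp only [Finset.mem_inter, hmemK, Finset.mem_insert, Finset.mem_singleton]
          constructor
          · rintro ⟨hwX, hw | hw | hw⟩
            · exact Or.inl hw
            · rcases hwX with hwk | hwX'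
              · exact Or.inr hwk
              · exact absurd (hw ▸ hwX') hjX
            · exact Or.inr hw
          · rintro (hw | hw)
            · exact ⟨Or.inr (hw.symm ▸ hiX), Or.inl hw⟩
            · exact ⟨Or.inl hw, Or.inr (Or.inr hw)⟩
        calc coef f X = coef f ∅ := by rw [hstrip X, e1, hvi]
          _ = coef f K := habeq
          _ = coef f (insert k X) := by rw [hstrip (insert k X), e2, hvik]
      · have hjX : j ∈ X := by
          by_contra h'
          exact hiX (hpar.mpr h')
        have e1 : X ∩ K = {j} := by
          ext w
          simp only [Finset.mem_inter, hmemK, Finset.mem_singleton]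
          constructor
          · rintro ⟨hwX, hw | hw | hw⟩
            · exact absurd (hw ▸ hwX) hiX
            · exact hw
            · exact absurd (hw ▸ hwX) hkX
          · intro hw
            exact ⟨hw.symm ▸ hjX, Or.inr (Or.inl hw)⟩
        have e2 : (insert k X) ∩ K = {j, k} := by
          ext w
          simp only [Finset.mem_inter, hmemK, Finset.mem_insert, Finset.mem_singleton]
          constructor
          · rintro ⟨hwX, hw | hw | hw⟩
            · rcases hwX with hwk | hwX'
              · exact Or.inr hwk
              · exact absurd (hw ▸ hwX') hiX
            · exact Or.inl hw
            · exact Or.inr hw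
          · rintro (hw | hw)
            · exact ⟨Or.inr (hw.symm ▸ hjX), Or.inr (Or.inl hw)⟩
            · exact ⟨Or.inl hw, Or.inr (Or.inr hw)⟩
        calc coef f X = coef f ∅ := by rw [hstrip X, e1, hvj]
          _ = coef f K := habeq
          _ = coef f (insert k X) := by rw [hstrip (insert k X), e2, hvjk]
    -- the median normal form
    have hform : ∀ x : Fin n → L,
        f x = (coef f ∅ ⊔ ((x i ⊓ x j) ⊔ (x j ⊓ x k) ⊔ (x k ⊓ x i))) ⊓ coef f K := by
      intro x
      have hRHS : (coef f ∅ ⊔ ((x i ⊓ x j) ⊔ (x j ⊓ x k) ⊔ (x k ⊓ x i))) ⊓ coef f K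
          = coef f ∅ ⊔ (((x i ⊓ x j) ⊓ coef f K ⊔ (x j ⊓ x k) ⊓ coef f K) ⊔
              (x k ⊓ x i) ⊓ coef f K) := by
        rw [inf_sup_right, inf_sup_right, inf_sup_right, inf_eq_left.mpr hab.le]
      rw [hRHS, poly_nf hf x]
      apply le_antisymm
      · apply Finset.sup_le
        intro S _
        have hble : coef f S ≤ coef f K := by
          have h1 : coef f Finset.univ = coef f K := by
            rw [hstrip Finset.univ, Finset.univ_inter]
          rw [← h1]
          exact Mc (Finset.subset_univ S)
        by_cases h1 : i ∈ S ∧ j ∈ S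
        · have hterm : coef f S ⊓ S.inf x ≤ (x i ⊓ x j) ⊓ coef f K :=
            le_inf (le_trans inf_le_right
                (le_inf (Finset.inf_le h1.1) (Finset.inf_le h1.2)))
              (le_trans inf_le_left hble)
          exact le_trans hterm (le_sup_of_le_right (le_sup_of_le_left le_sup_left))
        · by_cases h2 : j ∈ S ∧ k ∈ S
          · have hterm : coef f S ⊓ S.inf x ≤ (x j ⊓ x k) ⊓ coef f K :=
              le_inf (le_trans inf_le_right
                  (le_inf (Finset.inf_le h2.1) (Finset.inf_le h2.2)))
                (le_trans inf_le_left hble)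
            exact le_trans hterm (le_sup_of_le_right (le_sup_of_le_left le_sup_right))
          · by_cases h3 : k ∈ S ∧ i ∈ S
            · have hterm : coef f S ⊓ S.inf x ≤ (x k ⊓ x i) ⊓ coef f K :=
                le_inf (le_trans inf_le_right
                    (le_inf (Finset.inf_le h3.1) (Finset.inf_le h3.2)))
                  (le_trans inf_le_left hble)
              exact le_trans hterm (le_sup_of_le_right le_sup_right)
            · -- no pair: value a
              have hSa : coef f S = coef f ∅ := by
                rw [hstrip S]
                by_cases hiS : i ∈ S
                · have hjS : j ∉ S := fun h => h1 ⟨hiS, h⟩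
                  have hkS : k ∉ S := fun h => h3 ⟨h, hiS⟩
                  have e : S ∩ K = {i} := by
                    ext w
                    simp only [Finset.mem_inter, hmemK, Finset.mem_singleton]
                    constructor
                    · rintro ⟨hwS, hw | hw | hw⟩
                      · exact hw
                      · exact absurd (hw ▸ hwS) hjS
                      · exact absurd (hw ▸ hwS) hkS
                    · intro hw
                      exact ⟨hw.symm ▸ hiS, Or.inl hw⟩
                  rw [e, hvi]
                · by_cases hjS : j ∈ S
                  · have hkS : k ∉ S := fun h => h2 ⟨hjS, h⟩
                    have e : S ∩ K = {j} := by
                      ext w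
                      simp only [Finset.mem_inter, hmemK, Finset.mem_singleton]
                      constructor
                      · rintro ⟨hwS, hw | hw | hw⟩
                        · exact absurd (hw ▸ hwS) hiS
                        · exact hw
                        · exact absurd (hw ▸ hwS) hkS
                      · intro hw
                        exact ⟨hw.symm ▸ hjS, Or.inr (Or.inl hw)⟩
                    rw [e, hvj]
                  · by_cases hkS : k ∈ S
                    · have e : S ∩ K = {k} := by
                        ext w
                        simp only [Finset.mem_inter, hmemK, Finset.mem_singleton]
                        constructor
                        · rintro ⟨hwS, hw | hw | hw⟩
                          · exact absurd (hw ▸ hwS) hiS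
                          · exact absurd (hw ▸ hwS) hjS
                          · exact hw
                        · intro hw
                          exact ⟨hw.symm ▸ hkS, Or.inr (Or.inr hw)⟩
                      rw [e, hvk]
                    · have e : S ∩ K = ∅ := by
                        ext w
                        simp only [Finset.mem_inter, hmemK, Finset.notMem_empty,
                          iff_false]
                        rintro ⟨hwS, hw | hw | hw⟩
                        · exact hiS (hw ▸ hwS)
                        · exact hjS (hw ▸ hwS)
                        · exact hkS (hw ▸ hwS)
                      rw [e]
              exact le_sup_of_le_left (le_trans inf_le_left (le_of_eq hSa))
      · apply sup_le
        · have h0 : coef f ∅ = coef f ∅ ⊓ (∅ : Finset (Fin n)).inf x := by simp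
          exact le_trans (le_of_eq h0)
            (Finset.le_sup (f := fun S => coef f S ⊓ S.inf x) (mem_pw ∅))
        · have hpairterm : ∀ (u v : Fin n), coef f {u, v} = coef f K →
              (x u ⊓ x v) ⊓ coef f K ≤
                Finset.univ.powerset.sup (fun S => coef f S ⊓ S.inf x) := by
            intro u v huv
            have hterm : (x u ⊓ x v) ⊓ coef f K
                = coef f ({u, v} : Finset (Fin n)) ⊓ (({u, v} : Finset (Fin n)).inf x) := by
              rw [huv, show (({u, v} : Finset (Fin n)).inf x) = x u ⊓ x v by simp]
              exact inf_comm _ _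
            exact le_trans (le_of_eq hterm)
              (Finset.le_sup (f := fun S => coef f S ⊓ S.inf x) (mem_pw _))
          have hvki : coef f {k, i} = coef f K := by
            rw [show ({k, i} : Finset (Fin n)) = {i, k} by ext w; simp; tauto]
            exact hvik
          exact sup_le (sup_le (hpairterm i j hvij) (hpairterm j k hvjk))
            (hpairterm k i hvki)
    have hgap2 : arityGap f = 2 :=
      gapOfMed (coef f ∅) (coef f K) i j k hab hij hjk hik hEi hEj hEk hoth hform
    refine ⟨Or.inr hgap2, ?_, fun _ => hgap2⟩
    intro _
    exact ⟨coef f ∅, coef f K, i, j, k, hab, hij, hjk, hik, hEi, hEj, hEk, hoth, hform⟩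
  · -- the gap-1 case
    push_neg at hH
    obtain ⟨p, q, hp, hq, hpq, hnd⟩ := hH
    have hEFM : essFinset (idMinor f p q) = (essFinset f).erase p := by
      apply Finset.Subset.antisymm (minor_ess_subset hpq hq)
      intro l hl
      rw [Finset.mem_erase, mem_essFinset] at hl
      obtain ⟨hlp, hEl⟩ := hl
      rw [mem_essFinset]
      by_cases hlq : l = q
      · rw [hlq]
        exact essential_minor_partner hf hq
      · exact essential_minor_of_not_dead hlq hlp (hnd l hEl hlp hlq)
    have hd1 : essArity f - essArity (idMinor f p q) = 1 := by
      rw [essArity_eq, essArity_eq, hEFM,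
        Finset.card_erase_of_mem (mem_essFinset.mpr hp)]
      omega
    have h1mem : (1 : ℕ) ∈ {d | ∃ i j, i ≠ j ∧ EssentialAt f i ∧ EssentialAt f j ∧
        d = essArity f - essArity (idMinor f i j)} := ⟨p, q, hpq, hp, hq, hd1.symm⟩
    have hgap1 : arityGap f = 1 := by
      have hAG : arityGap f = sInf {d | ∃ i j, i ≠ j ∧ EssentialAt f i ∧ EssentialAt f j ∧
          d = essArity f - essArity (idMinor f i j)} := rfl
      have hle : sInf {d | ∃ i j, i ≠ j ∧ EssentialAt f i ∧ EssentialAt f j ∧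
          d = essArity f - essArity (idMinor f i j)} ≤ 1 := Nat.sInf_le h1mem
      have hmem := Nat.sInf_mem (⟨1, h1mem⟩ : Set.Nonempty _)
      have hge := hge1 _ hmem
      omega
    refine ⟨Or.inl hgap1, ?_, ?_⟩
    · intro h2
      rw [hgap1] at h2
      exact absurd h2 (by norm_num)
    · rintro ⟨a, b, i, j, k, hab, hij, hjk, hik, hEi, hEj, hEk, hoth, hform⟩
      have h2 := gapOfMed a b i j k hab hij hjk hik hEi hEj hEk hoth hform
      rw [hgap1] at h2
      exact absurd h2 (by norm_num)
end

section
/- Every Boolean function f : {0,1}^n → {0,1} with at least two essential variables has arity gap 1 or 2. -/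
namespace BGap

variable {n : ℕ}

/-- Flip coordinate `k` of a Boolean point. -/
def fl (x : Fin n → Bool) (k : Fin n) : Fin n → Bool := Function.update x k (!x k)

@[simp] lemma fl_same (x : Fin n → Bool) (k : Fin n) : fl x k k = !x k := by
  simp [fl]

@[simp] lemma fl_ne (x : Fin n → Bool) {k l : Fin n} (h : l ≠ k) : fl x k l = x l := by
  simp [fl, Function.update_of_ne h]

lemma fl_fl (x : Fin n → Bool) (k : Fin n) : fl (fl x k) k = x := by
  funext m
  rcases eq_or_ne m k with rfl | h
  · simp
  · simp [h]

lemma fl_comm (x : Fin n → Bool) {k l : Fin n} (h : k ≠ l) :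
    fl (fl x k) l = fl (fl x l) k := by
  funext m
  rcases eq_or_ne m k with rfl | hmk
  · rw [fl_ne _ h, fl_same, fl_same, fl_ne _ h]
  · rcases eq_or_ne m l with rfl | hml
    · rw [fl_same, fl_ne _ h.symm, fl_ne _ h.symm, fl_same]
    · rw [fl_ne _ hml, fl_ne _ hmk, fl_ne _ hmk, fl_ne _ hml]

lemma bnot_of_ne {a b : Bool} (h : a ≠ b) : b = !a := by
  cases a <;> cases b <;> simp_all

variable (f : (Fin n → Bool) → Bool)

lemma essential_iff_flip (k : Fin n) :
    EssentialAt f k ↔ ∃ x, f (fl x k) ≠ f x := by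
  constructor
  · rintro ⟨a, b, hab⟩
    by_cases hb : b = a k
    · exact absurd (by rw [hb, Function.update_eq_self]) hab
    · exact ⟨a, by rwa [fl, ← bnot_of_ne (Ne.symm hb)]⟩
  · rintro ⟨x, hx⟩
    exact ⟨x, !x k, hx⟩

lemma not_essential_iff (k : Fin n) :
    ¬ EssentialAt f k ↔ ∀ x, f (fl x k) = f x := by
  rw [essential_iff_flip]
  push_neg
  rfl

/-- The identified pair is "dead" : the diagonal does not depend on the common value. -/
def sdead (i j : Fin n) : Prop := ∀ x, x i = x j → f (fl (fl x i) j) = f x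

/-- Variable `l` is insensitive on the diagonal `x i = x j`. -/
def ldead (i j l : Fin n) : Prop := ∀ x, x i = x j → f (fl x l) = f x

/-- `l` is an essential variable of `f` (distinct from `i,j`) lost by identifying `i,j`. -/
def DR (i j l : Fin n) : Prop := l ≠ i ∧ l ≠ j ∧ EssentialAt f l ∧ ldead f i j l

/-- At least two of the potential essential variables of the minor are dead. -/
def TD (i j : Fin n) : Prop :=
  (sdead f i j ∧ ∃ l, DR f i j l) ∨ ∃ l₁ l₂, l₁ ≠ l₂ ∧ DR f i j l₁ ∧ DR f i j l₂

lemma not_ldead_essential {i j l : Fin n} (h : ¬ ldead f i j l) : EssentialAt f l := by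
  rw [ldead] at h
  push_neg at h
  obtain ⟨x, -, hx⟩ := h
  exact (essential_iff_flip f l).2 ⟨x, hx⟩

section MinorChar

variable {i j : Fin n} (hij : i ≠ j)

lemma upd_self_of_conc {x : Fin n → Bool} (hc : x i = x j) :
    Function.update x i (x j) = x := by
  rw [← hc, Function.update_eq_self]

include hij in
lemma minor_indep_i : ¬ EssentialAt (idMinor f i j) i := by
  rintro ⟨a, b, hab⟩
  apply hab
  show f (Function.update (Function.update a i b) i ((Function.update a i b) j)) =
    f (Function.update a i (a j))
  rw [Function.update_of_ne hij.symm, Function.update_idem]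

include hij in
lemma minor_ess_j_iff : EssentialAt (idMinor f i j) j ↔ ¬ sdead f i j := by
  have key : ∀ x : Fin n → Bool,
      Function.update (fl x j) i ((fl x j) j) =
        fl (fl (Function.update x i (x j)) i) j := by
    intro x
    funext m
    rcases eq_or_ne m i with rfl | hmi
    · rw [Function.update_self, fl_same, fl_ne _ hij, fl_same, Function.update_self]
    · rcases eq_or_ne m j with rfl | hmj
      · rw [Function.update_of_ne hmi, fl_same, fl_same, fl_ne _ hmi, Function.update_of_ne hmi]
      · rw [Function.update_of_ne hmi, fl_ne _ hmj, fl_ne _ hmj, fl_ne _ hmi,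
          Function.update_of_ne hmi]
  rw [essential_iff_flip]
  constructor
  · rintro ⟨x, hx⟩
    intro hsd
    apply hx
    show f (Function.update (fl x j) i ((fl x j) j)) = f (Function.update x i (x j))
    rw [key]
    exact hsd _ (by rw [Function.update_self, Function.update_of_ne hij.symm])
  · intro hsd
    rw [sdead] at hsd
    push_neg at hsd
    obtain ⟨x, hc, hx⟩ := hsd
    refine ⟨x, ?_⟩
    show f (Function.update (fl x j) i ((fl x j) j)) ≠ f (Function.update x i (x j))
    rw [key, upd_self_of_conc hc]
    exact hx

include hij in
lemma minor_ess_other_iff {l : Fin n} (hli : l ≠ i) (hlj : l ≠ j) :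
    EssentialAt (idMinor f i j) l ↔ ¬ ldead f i j l := by
  have key : ∀ x : Fin n → Bool,
      Function.update (fl x l) i ((fl x l) j) =
        fl (Function.update x i (x j)) l := by
    intro x
    funext m
    rcases eq_or_ne m i with rfl | hmi
    · rw [Function.update_self, fl_ne _ hlj.symm, fl_ne _ hli.symm, Function.update_self]
    · rcases eq_or_ne m l with rfl | hml
      · rw [Function.update_of_ne hmi, fl_same, fl_same, Function.update_of_ne hmi]
      · rw [Function.update_of_ne hmi, fl_ne _ hml, fl_ne _ hml, Function.update_of_ne hmi]
  rw [essential_iff_flip, ldead]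
  push_neg
  constructor
  · rintro ⟨x, hx⟩
    refine ⟨Function.update x i (x j), ?_, ?_⟩
    · rw [Function.update_self, Function.update_of_ne hij.symm]
    · intro h
      apply hx
      show f (Function.update (fl x l) i ((fl x l) j)) = f (Function.update x i (x j))
      rw [key]
      exact h
  · rintro ⟨x, hc, hx⟩
    refine ⟨x, ?_⟩
    show f (Function.update (fl x l) i ((fl x l) j)) ≠ f (Function.update x i (x j))
    rw [key, upd_self_of_conc hc]
    exact hx

end MinorChar

section Kill

variable {i j k : Fin n}

lemma td_elim {p q r0 : Fin n} (h : TD f p q) :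
    (∃ r, DR f p q r ∧ r ≠ r0) ∨ sdead f p q := by
  rcases h with ⟨hs, -⟩ | ⟨l₁, l₂, hne, h₁, h₂⟩
  · exact Or.inr hs
  · rcases eq_or_ne l₁ r0 with rfl | h
    · exact Or.inl ⟨l₂, h₂, hne.symm⟩
    · exact Or.inl ⟨l₁, h₁, h⟩

/-- If `r` has a sensitive point on the diagonal of `{i,j}` and `k` is dead there,
then `r` also has sensitive points on the diagonals of `{i,k}` and `{j,k}`. -/
lemma lw (hij : i ≠ j) (hki : k ≠ i) (hkj : k ≠ j) (hk : ldead f i j k) {r : Fin n}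
    (hri : r ≠ i) (hrj : r ≠ j) (hrk : r ≠ k) (hnr : ¬ ldead f i j r) :
    ¬ ldead f i k r ∧ ¬ ldead f j k r := by
  rw [ldead] at hnr; push_neg at hnr
  obtain ⟨x, hc, hx⟩ := hnr
  obtain ⟨y, hyi, hyj, hy⟩ : ∃ y, y i = y k ∧ y j = y k ∧ f (fl y r) ≠ f y := by
    by_cases hxk : x k = x i
    · exact ⟨x, hxk.symm, hc ▸ hxk.symm, hx⟩
    · refine ⟨fl x k, ?_, ?_, ?_⟩
      · rw [fl_ne _ hki.symm, fl_same]
        exact bnot_of_ne hxk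
      · rw [fl_ne _ hkj.symm, fl_same, ← hc]
        exact bnot_of_ne hxk
      · have h1 : f (fl x k) = f x := hk x hc
        have h2 : fl (fl x k) r = fl (fl x r) k := fl_comm x hrk.symm
        have h3 : f (fl (fl x r) k) = f (fl x r) := hk (fl x r) (by
          rw [fl_ne _ hri.symm, fl_ne _ hrj.symm]; exact hc)
        rw [h2, h3, h1]
        exact hx
  exact ⟨fun hld => hy (hld y hyi), fun hld => hy (hld y hyj)⟩

/-- `j` cannot be dead in the minor along `{i,k}` when `k` is lost by `{i,j}`. -/
lemma klj (hij : i ≠ j) (hk : DR f i j k) (hjE : EssentialAt f j)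
    (htd : TD f j k) : ¬ ldead f i k j := by
  obtain ⟨hki, hkj, hkE, hkld⟩ := hk
  intro hLj
  have step2 : ∀ r, r ≠ i → r ≠ j → r ≠ k → ldead f i j r → ldead f i k r := by
    intro r hri hrj hrk hr x hcik
    by_cases hcij : x i = x j
    · exact hr x hcij
    · have hxj : x j = !x i := bnot_of_ne hcij
      have h1 : f (fl x j) = f x := hLj x hcik
      have h2 : f (fl (fl x j) r) = f (fl x j) := hr (fl x j) (by
        rw [fl_ne _ hij, fl_same, hxj, Bool.not_not])
      have h3 : f (fl (fl x r) j) = f (fl x r) := hLj (fl x r) (by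
        rw [fl_ne _ hri.symm, fl_ne _ hrk.symm]; exact hcik)
      calc f (fl x r) = f (fl (fl x r) j) := h3.symm
        _ = f (fl (fl x j) r) := by rw [fl_comm x hrj]
        _ = f (fl x j) := h2
        _ = f x := h1
  rcases td_elim f (r0 := i) htd with ⟨r, hDR, hri⟩ | hsjk
  · obtain ⟨hrj, hrk, hrE, hrld⟩ := hDR
    by_cases hrL : ldead f i j r
    · have hikr : ldead f i k r := step2 r hri hrj hrk hrL
      obtain ⟨x, hx⟩ := (essential_iff_flip f r).1 hrE
      have h1 : x i ≠ x j := fun hc => hx (hrL x hc)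
      have h2 : x j ≠ x k := fun hc => hx (hrld x hc)
      have h3 : x i ≠ x k := fun hc => hx (hikr x hc)
      cases hb1 : x i <;> cases hb2 : x j <;> cases hb3 : x k <;> simp_all
    · exact (lw f hij hki hkj hkld hri hrj hrk hrL).2 hrld
  · -- sdead f j k : then k is not essential at all, contradiction
    have claim : ∀ x, x k ≠ x i → f (fl x k) = f x := by
      intro x hxk
      by_cases hcij : x i = x j
      · exact hkld x hcij
      · have hxj : x j = !x i := bnot_of_ne hcij
        have hxk' : x k = !x i := by
          have h := bnot_of_ne hxk
          cases hb1 : x i <;> cases hb2 : x k <;> simp_all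
        have e1 : f (fl (fl x j) k) = f x := hsjk x (by rw [hxj, hxk'])
        have e2 : f (fl (fl x k) j) = f (fl x k) := hLj (fl x k) (by
          rw [fl_ne _ hki.symm, fl_same, hxk', Bool.not_not])
        have e3 : fl (fl x k) j = fl (fl x j) k := fl_comm x hkj
        calc f (fl x k) = f (fl (fl x k) j) := e2.symm
          _ = f (fl (fl x j) k) := by rw [e3]
          _ = f x := e1
    have hcon : ¬ EssentialAt f k := by
      rw [not_essential_iff]
      intro x
      by_cases hxk : x k = x i
      · have h2 : (fl x k) k ≠ (fl x k) i := by
          rw [fl_same, fl_ne _ hki.symm, hxk]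
          simp
        have := claim (fl x k) h2
        rw [fl_fl] at this
        exact this.symm
      · exact claim x hxk
    exact hcon hkE

/-- The pair `{i,k}` cannot be s-dead when `k` is lost by `{i,j}` and some other
variable is lost by `{i,j}` as well. -/
lemma kls (hij : i ≠ j) (hk : DR f i j k) {l : Fin n} (hl : DR f i j l) (hlk : l ≠ k)
    (hjE : EssentialAt f j) (htd : TD f j k) : ¬ sdead f i k := by
  obtain ⟨hki, hkj, hkE, hkld⟩ := hk
  intro hsik
  have step2' : ∀ r, r ≠ i → r ≠ j → r ≠ k → ldead f i j r →
      ∀ x, x i ≠ x j → x i = x k → f (fl x r) = f x := by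
    intro r hri hrj hrk hr x hdij hcik
    have hy : f (fl (fl x i) k) = f x := hsik x hcik
    have hyc : (fl (fl x i) k) i = (fl (fl x i) k) j := by
      rw [fl_ne _ hki.symm, fl_same, fl_ne _ hkj.symm, fl_ne _ hij.symm]
      exact (bnot_of_ne hdij).symm
    have h2 : f (fl (fl (fl x i) k) r) = f (fl (fl x i) k) := hr _ hyc
    have h3 : f (fl (fl (fl x r) i) k) = f (fl x r) := hsik (fl x r) (by
      rw [fl_ne _ hri.symm, fl_ne _ hrk.symm]; exact hcik)
    have hpt : fl (fl (fl x r) i) k = fl (fl (fl x i) k) r := by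
      rw [fl_comm x hri, fl_comm (fl x i) hrk]
    calc f (fl x r) = f (fl (fl (fl x r) i) k) := h3.symm
      _ = f (fl (fl (fl x i) k) r) := by rw [hpt]
      _ = f (fl (fl x i) k) := h2
      _ = f x := hy
  rcases td_elim f (r0 := i) htd with ⟨r, hDR, hri⟩ | hsjk
  · obtain ⟨hrj, hrk, hrE, hrld⟩ := hDR
    by_cases hrL : ldead f i j r
    · obtain ⟨x, hx⟩ := (essential_iff_flip f r).1 hrE
      have h1 : x i ≠ x j := fun hc => hx (hrL x hc)
      have h2 : x j ≠ x k := fun hc => hx (hrld x hc)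
      have h3 : x i = x k := by
        cases hb1 : x i <;> cases hb2 : x j <;> cases hb3 : x k <;> simp_all
      exact hx (step2' r hri hrj hrk hrL x h1 h3)
    · exact (lw f hij hki hkj hkld hri hrj hrk hrL).2 hrld
  · -- sdead f j k : then l is not essential at all, contradiction
    obtain ⟨hli, hlj, hlE, hlld⟩ := hl
    have hcon : ¬ EssentialAt f l := by
      rw [not_essential_iff]
      intro x
      by_cases hcij : x i = x j
      · exact hlld x hcij
      · by_cases hcjk : x j = x k
        · have e1 : f (fl (fl x j) k) = f x := hsjk x hcjk
          have hyc : (fl (fl x j) k) i = (fl (fl x j) k) j := by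
            rw [fl_ne _ hki.symm, fl_ne _ hij, fl_ne _ hkj.symm, fl_same]
            have := bnot_of_ne hcij
            cases hb1 : x i <;> cases hb2 : x j <;> simp_all
          have e2 : f (fl (fl (fl x j) k) l) = f (fl (fl x j) k) := hlld _ hyc
          have e3 : f (fl (fl (fl x l) j) k) = f (fl x l) := hsjk (fl x l) (by
            rw [fl_ne _ hlj.symm, fl_ne _ hlk.symm]; exact hcjk)
          have hpt : fl (fl (fl x l) j) k = fl (fl (fl x j) k) l := by
            rw [fl_comm x hlj, fl_comm (fl x j) hlk]
          calc f (fl x l) = f (fl (fl (fl x l) j) k) := e3.symm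
            _ = f (fl (fl (fl x j) k) l) := by rw [hpt]
            _ = f (fl (fl x j) k) := e2
            _ = f x := e1
        · have h3 : x i = x k := by
            cases hb1 : x i <;> cases hb2 : x j <;> cases hb3 : x k <;> simp_all
          exact step2' l hli hlj hlk hlld x hcij h3
    exact hcon hlE

end Kill

lemma descent (twodead : ∀ i j, i ≠ j → EssentialAt f i → EssentialAt f j → TD f i j) :
    ∀ N i j, ({l | DR f i j l}).ncard ≤ N → i ≠ j → EssentialAt f i → EssentialAt f j →
      ¬ sdead f i j → False := by
  intro N
  induction N with
  | zero =>
    intro i j hcard hij hiE hjE hsd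
    rcases td_elim f (r0 := i) (twodead i j hij hiE hjE) with ⟨r, hDR, -⟩ | h
    · have hmem : r ∈ {l | DR f i j l} := hDR
      have h1 : ({l | DR f i j l}).ncard = 0 := Nat.le_zero.1 hcard
      rw [Set.ncard_eq_zero] at h1
      rw [h1] at hmem
      exact hmem
    · exact hsd h
  | succ N ih =>
    intro i j hcard hij hiE hjE hsd
    obtain ⟨l₁, l₂, hne, h₁, h₂⟩ : ∃ l₁ l₂, l₁ ≠ l₂ ∧ DR f i j l₁ ∧ DR f i j l₂ := by
      rcases twodead i j hij hiE hjE with ⟨hs, -⟩ | h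
      · exact absurd hs hsd
      · exact h
    obtain ⟨hki, hkj, hkE, hkld⟩ := h₁
    have hjk : j ≠ l₁ := Ne.symm hkj
    have htdjk : TD f j l₁ := twodead j l₁ hjk hjE hkE
    have hnsik : ¬ sdead f i l₁ :=
      kls f hij ⟨hki, hkj, hkE, hkld⟩ h₂ hne.symm hjE htdjk
    have hsub : {l | DR f i l₁ l} ⊆ {l | DR f i j l} \ {l₁} := by
      intro r hr
      obtain ⟨hri, hrk, hrE, hrld⟩ := hr
      have hrj : r ≠ j := by
        rintro rfl
        exact (klj f hij ⟨hki, hkj, hkE, hkld⟩ hjE htdjk) hrld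
      refine ⟨⟨hri, hrj, hrE, ?_⟩, by simpa using hrk⟩
      by_contra hno
      exact (lw f hij hki hkj hkld hri hrj hrk hno).1 hrld
    have hk_mem : l₁ ∈ {l | DR f i j l} := ⟨hki, hkj, hkE, hkld⟩
    have hc2 : ({l | DR f i l₁ l}).ncard ≤ N := by
      have e1 : ({l | DR f i l₁ l}).ncard ≤ ({l | DR f i j l} \ {l₁}).ncard :=
        Set.ncard_le_ncard hsub (Set.toFinite _)
      have e2 : ({l | DR f i j l} \ {l₁}).ncard = ({l | DR f i j l}).ncard - 1 :=
        Set.ncard_diff_singleton_of_mem hk_mem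
      have e3 : 1 ≤ ({l | DR f i j l}).ncard := by
        have : ({l₁} : Set (Fin n)) ⊆ {l | DR f i j l} := by
          intro a ha; rw [Set.mem_singleton_iff] at ha; rw [ha]; exact hk_mem
        have := Set.ncard_le_ncard this (Set.toFinite _)
        simpa using this
      omega
    exact ih i l₁ hc2 (Ne.symm hki) hiE hkE hnsik

lemma twodead_of_small {i j : Fin n} (hij : i ≠ j) (hiE : EssentialAt f i)
    (hjE : EssentialAt f j) (hm : essArity (idMinor f i j) + 3 ≤ essArity f) :
    TD f i j := by
  classical
  have hEmC : {k | EssentialAt (idMinor f i j) k} ⊆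
      insert j ({k | EssentialAt f k} \ {i, j}) := by
    intro l hl
    have hli : l ≠ i := by rintro rfl; exact minor_indep_i f hij hl
    rcases eq_or_ne l j with rfl | hlj
    · exact Set.mem_insert _ _
    · refine Set.mem_insert_of_mem _ ⟨?_, by simp [hli, hlj]⟩
      exact not_ldead_essential f ((minor_ess_other_iff f hij hli hlj).1 hl)
  have hij_sub : ({i, j} : Set (Fin n)) ⊆ {k | EssentialAt f k} := by
    intro a ha
    rcases ha with rfl | ha
    · exact hiE
    · rw [Set.mem_singleton_iff] at ha; rw [ha]; exact hjE
  have hpair : ({i, j} : Set (Fin n)).ncard = 2 := Set.ncard_pair hij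
  have hm2 : 2 ≤ ({k | EssentialAt f k}).ncard := by
    have := Set.ncard_le_ncard hij_sub (Set.toFinite _)
    omega
  have hCcard : (insert j ({k | EssentialAt f k} \ {i, j})).ncard =
      ({k | EssentialAt f k}).ncard - 1 := by
    have h1 : j ∉ {k | EssentialAt f k} \ {i, j} := by simp
    rw [Set.ncard_insert_of_notMem h1 (Set.toFinite _), Set.ncard_diff hij_sub, hpair]
    omega
  have hdiff : 1 < ((insert j ({k | EssentialAt f k} \ {i, j})) \
      {k | EssentialAt (idMinor f i j) k}).ncard := by
    rw [Set.ncard_diff hEmC]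
    have hm' : {k | EssentialAt (idMinor f i j) k}.ncard + 3 ≤
        ({k | EssentialAt f k}).ncard := hm
    omega
  obtain ⟨a, b, ha, hb, hab⟩ := (Set.one_lt_ncard_iff).1 hdiff
  have interp : ∀ c, c ∈ (insert j ({k | EssentialAt f k} \ {i, j})) \
      {k | EssentialAt (idMinor f i j) k} → (c = j ∧ sdead f i j) ∨ DR f i j c := by
    rintro c ⟨hcC, hcEm⟩
    rcases eq_or_ne c j with rfl | hcj
    · exact Or.inl ⟨rfl, not_not.1 (fun h => hcEm ((minor_ess_j_iff f hij).2 h))⟩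
    · have hcmem : c ∈ {k | EssentialAt f k} \ {i, j} := by
        rcases hcC with h | h
        · exact absurd h hcj
        · exact h
      have hci : c ≠ i := by
        intro h
        exact hcmem.2 (by rw [h]; exact Set.mem_insert _ _)
      refine Or.inr ⟨hci, hcj, hcmem.1, ?_⟩
      exact not_not.1 (fun h => hcEm ((minor_ess_other_iff f hij hci hcj).2 h))
  rcases interp a ha with ⟨rfl, hsd⟩ | hDa
  · rcases interp b hb with ⟨rfl, -⟩ | hDb
    · exact absurd rfl hab
    · exact Or.inl ⟨hsd, b, hDb⟩
  · rcases interp b hb with ⟨rfl, hsd⟩ | hDb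
    · exact Or.inl ⟨hsd, a, hDa⟩
    · exact Or.inr ⟨a, b, hab, hDa, hDb⟩

lemma ex_third (h3 : 3 ≤ essArity f) (p q : Fin n) :
    ∃ r, EssentialAt f r ∧ r ≠ p ∧ r ≠ q := by
  by_contra h
  push_neg at h
  have hsub : {k | EssentialAt f k} ⊆ {p, q} := by
    intro r hr
    rcases eq_or_ne r p with rfl | h1
    · exact Set.mem_insert _ _
    · exact Set.mem_insert_of_mem _ (h r hr h1)
  have h1 := Set.ncard_le_ncard hsub (Set.toFinite _)
  have h2 : ({p, q} : Set (Fin n)).ncard ≤ 2 := by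
    refine le_trans (Set.ncard_insert_le _ _) ?_
    simp
  have h4 : {k | EssentialAt f k}.ncard = essArity f := rfl
  omega

lemma pd_all (h3 : 3 ≤ essArity f)
    (hall : ∀ i j, i ≠ j → EssentialAt f i → EssentialAt f j → sdead f i j) :
    ∀ p q, p ≠ q → EssentialAt f p → EssentialAt f q →
      ∀ x, f (fl (fl x p) q) = f x := by
  intro p q hpq hp hq x
  by_cases hc : x p = x q
  · exact hall p q hpq hp hq x hc
  · obtain ⟨r, hrE, hrp, hrq⟩ := ex_third f h3 p q
    by_cases hr : x r = x p
    · have h1 : f (fl (fl x p) r) = f x := hall p r (Ne.symm hrp) hp hrE x hr.symm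
      have hcq : (fl (fl x p) r) q = (fl (fl x p) r) r := by
        rw [fl_ne _ hrq.symm, fl_ne _ (Ne.symm hpq), fl_same, fl_ne _ hrp]
        rw [hr]
        exact bnot_of_ne hc
      have h2 : f (fl (fl (fl (fl x p) r) q) r) = f (fl (fl x p) r) :=
        hall q r (Ne.symm hrq) hq hrE _ hcq
      have hpt : fl (fl (fl (fl x p) r) q) r = fl (fl x p) q := by
        rw [fl_comm (fl x p) hrq, fl_fl]
      rw [← hpt, h2, h1]
    · have hrq' : x r = x q := by
        cases hb1 : x p <;> cases hb2 : x q <;> cases hb3 : x r <;> simp_all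
      have h1 : f (fl (fl x q) r) = f x := hall q r (Ne.symm hrq) hq hrE x hrq'.symm
      have hcq : (fl (fl x q) r) p = (fl (fl x q) r) r := by
        rw [fl_ne _ hrp.symm, fl_ne _ hpq, fl_same, fl_ne _ hrq]
        rw [hrq']
        exact bnot_of_ne (Ne.symm hc)
      have h2 : f (fl (fl (fl (fl x q) r) p) r) = f (fl (fl x q) r) :=
        hall p r (Ne.symm hrp) hp hrE _ hcq
      have hpt : fl (fl (fl (fl x q) r) p) r = fl (fl x q) p := by
        rw [fl_comm (fl x q) hrp, fl_fl]
      have hfin : fl (fl x q) p = fl (fl x p) q := fl_comm x (Ne.symm hpq)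
      rw [← hfin, ← hpt, h2, h1]

lemma minor_ess_of_pd (h3 : 3 ≤ essArity f)
    (hall : ∀ i j, i ≠ j → EssentialAt f i → EssentialAt f j → sdead f i j)
    {i j l : Fin n} (hij : i ≠ j) (hiE : EssentialAt f i) (hjE : EssentialAt f j)
    (hlE : EssentialAt f l) (hli : l ≠ i) (hlj : l ≠ j) :
    EssentialAt (idMinor f i j) l := by
  rw [minor_ess_other_iff f hij hli hlj]
  intro hld
  obtain ⟨u, hu⟩ := (essential_iff_flip f l).1 hlE
  have hpd := pd_all f h3 hall
  by_cases hc : u i = u j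
  · exact hu (hld u hc)
  · have hyc : (fl u i) i = (fl u i) j := by
      rw [fl_same, fl_ne _ hij.symm]
      exact (bnot_of_ne hc).symm
    have h1 : f (fl (fl u i) l) = f u := hpd i l (Ne.symm hli) hiE hlE u
    have h2 : f (fl (fl (fl u l) i) l) = f (fl u l) := hpd i l (Ne.symm hli) hiE hlE (fl u l)
    have hpt : fl (fl (fl u l) i) l = fl u i := by
      rw [fl_comm u hli, fl_fl]
    have h3' : f (fl u i) = f (fl u l) := by rw [← hpt, h2]
    have hcontr := hld (fl u i) hyc
    rw [h1, h3'] at hcontr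
    exact hu hcontr.symm

theorem core (h3 : 3 ≤ essArity f) :
    ∃ i j, i ≠ j ∧ EssentialAt f i ∧ EssentialAt f j ∧
      essArity f ≤ essArity (idMinor f i j) + 2 := by
  by_contra hcon
  push_neg at hcon
  have twodead : ∀ i j, i ≠ j → EssentialAt f i → EssentialAt f j → TD f i j := by
    intro i j hij hiE hjE
    refine twodead_of_small f hij hiE hjE ?_
    have := hcon i j hij hiE hjE
    omega
  by_cases hsal : ∃ i j, i ≠ j ∧ EssentialAt f i ∧ EssentialAt f j ∧ ¬ sdead f i j
  · obtain ⟨i, j, hij, hiE, hjE, hsd⟩ := hsal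
    exact descent f twodead _ i j le_rfl hij hiE hjE hsd
  · push_neg at hsal
    obtain ⟨i, j, hiE2, hjE2, hij⟩ := (Set.one_lt_ncard_iff).1
      (show 1 < ({k | EssentialAt f k}).ncard by
        have h4 : {k | EssentialAt f k}.ncard = essArity f := rfl
        omega)
    have hiE2 : EssentialAt f i := hiE2
    have hjE2 : EssentialAt f j := hjE2
    have hsub : {k | EssentialAt f k} \ {i, j} ⊆ {k | EssentialAt (idMinor f i j) k} := by
      rintro l ⟨hlE, hl2⟩
      have hli : l ≠ i := by intro h; exact hl2 (by rw [h]; exact Set.mem_insert _ _)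
      have hlj : l ≠ j := by
        intro h
        exact hl2 (by rw [h]; exact Set.mem_insert_of_mem _ rfl)
      exact minor_ess_of_pd f h3 hsal hij hiE2 hjE2 hlE hli hlj
    have hij_sub : ({i, j} : Set (Fin n)) ⊆ {k | EssentialAt f k} := by
      intro a ha
      rcases ha with rfl | ha
      · exact hiE2
      · rw [Set.mem_singleton_iff] at ha; rw [ha]; exact hjE2
    have h1 := Set.ncard_le_ncard hsub (Set.toFinite _)
    have h2 : ({k | EssentialAt f k} \ ({i, j} : Set (Fin n))).ncard =
        ({k | EssentialAt f k}).ncard - 2 := by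
      rw [Set.ncard_diff hij_sub, Set.ncard_pair hij]
    have h5 : {k | EssentialAt f k}.ncard = essArity f := rfl
    have h6 : {k | EssentialAt (idMinor f i j) k}.ncard = essArity (idMinor f i j) := rfl
    have := hcon i j hij hiE2 hjE2
    omega

end BGap

theorem boolean_gap_one_or_two {n : ℕ} (f : (Fin n → Bool) → Bool)
    (hess : 2 ≤ essArity f) :
    arityGap f = 1 ∨ arityGap f = 2 := by
  classical
  have hcard : 1 < ({k | EssentialAt f k}).ncard := by
    have h4 : {k | EssentialAt f k}.ncard = essArity f := rfl
    omega
  obtain ⟨i0, j0, hi0, hj0, hne0⟩ := (Set.one_lt_ncard_iff).1 hcard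
  have hi0 : EssentialAt f i0 := hi0
  have hj0 : EssentialAt f j0 := hj0
  -- every minor along an essential pair drops the essential arity by at least one
  have hminor_le : ∀ i j : Fin n, i ≠ j → EssentialAt f i → EssentialAt f j →
      essArity (idMinor f i j) + 1 ≤ essArity f := by
    intro i j hij hiE hjE
    have hsub : {k | EssentialAt (idMinor f i j) k} ⊆ {k | EssentialAt f k} \ {i} := by
      intro l hl
      have hli : l ≠ i := by rintro rfl; exact BGap.minor_indep_i f hij hl
      refine ⟨?_, by simp [hli]⟩
      rcases eq_or_ne l j with rfl | hlj
      · exact hjE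
      · exact BGap.not_ldead_essential f ((BGap.minor_ess_other_iff f hij hli hlj).1 hl)
    have h1 := Set.ncard_le_ncard hsub (Set.toFinite _)
    have h2 : ({k | EssentialAt f k} \ ({i} : Set (Fin n))).ncard =
        ({k | EssentialAt f k}).ncard - 1 := Set.ncard_diff_singleton_of_mem hiE
    have h5 : {k | EssentialAt f k}.ncard = essArity f := rfl
    have h6 : {k | EssentialAt (idMinor f i j) k}.ncard = essArity (idMinor f i j) := rfl
    omega
  have hmem0 : (essArity f - essArity (idMinor f i0 j0)) ∈
      {d | ∃ i j, i ≠ j ∧ EssentialAt f i ∧ EssentialAt f j ∧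
        d = essArity f - essArity (idMinor f i j)} := ⟨i0, j0, hne0, hi0, hj0, rfl⟩
  have hSne : {d | ∃ i j, i ≠ j ∧ EssentialAt f i ∧ EssentialAt f j ∧
      d = essArity f - essArity (idMinor f i j)}.Nonempty := ⟨_, hmem0⟩
  have hge1 : ∀ d ∈ {d | ∃ i j, i ≠ j ∧ EssentialAt f i ∧ EssentialAt f j ∧
      d = essArity f - essArity (idMinor f i j)}, 1 ≤ d := by
    rintro d ⟨i, j, hij, hiE, hjE, rfl⟩
    have := hminor_le i j hij hiE hjE
    omega
  have hle2 : ∃ d ∈ {d | ∃ i j, i ≠ j ∧ EssentialAt f i ∧ EssentialAt f j ∧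
      d = essArity f - essArity (idMinor f i j)}, d ≤ 2 := by
    rcases le_or_gt 3 (essArity f) with h3 | h3
    · obtain ⟨i, j, hij, hiE, hjE, hle⟩ := BGap.core f h3
      exact ⟨_, ⟨i, j, hij, hiE, hjE, rfl⟩, by omega⟩
    · exact ⟨_, hmem0, by omega⟩
  obtain ⟨d, hdS, hd2⟩ := hle2
  have hinf_le : arityGap f ≤ 2 := le_trans (Nat.sInf_le hdS) hd2
  have hinf_ge : 1 ≤ arityGap f := hge1 _ (Nat.sInf_mem hSne)
  omega
end

section
/- Let f : A^n → B with ess f ≥ 2, and let g be a simple minor of f. If ess g = ess f, then f is also a simple minor of g (i.e., f and g are equivalent under the simple minor quasi-order). -/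
lemma agree_on_ess_aux {A B : Type*} {n : ℕ} (f : (Fin n → A) → B) :
    ∀ (s : Finset (Fin n)) (y y' : Fin n → A), (∀ j ∉ s, y j = y' j) →
      (∀ j, EssentialAt f j → y j = y' j) → f y = f y' := by
  classical
  intro s
  induction s using Finset.induction_on with
  | empty =>
    intro y y' h _
    congr 1
    funext j
    exact h j (by simp)
  | @insert a s ha ih =>
    intro y y' h hessy
    by_cases hya : y a = y' a
    · apply ih y y'
      · intro j hj
        by_cases hja : j = a
        · subst hja; exact hya
        · exact h j (by simp [hja, hj])
      · exact hessy
    · have hA : ¬ EssentialAt f a := fun he => hya (hessy a he)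
      have hA' : ∀ (x : Fin n → A) (b : A), f (Function.update x a b) = f x := by
        simpa [EssentialAt, not_exists] using hA
      set y'' := Function.update y a (y' a) with hy''
      have h1 : f y = f y'' := (hA' y (y' a)).symm
      have h2 : f y'' = f y' := by
        apply ih
        · intro j hj
          by_cases hja : j = a
          · subst hja; simp [hy'']
          · have hjs : j ∉ insert a s := by simp [hja, hj]
            rw [hy'', Function.update_of_ne hja]
            exact h j hjs
        · intro j hje
          by_cases hja : j = a
          · subst hja; simp [hy'']
          · rw [hy'', Function.update_of_ne hja]
            exact hessy j hje
      rw [h1, h2]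

lemma agree_on_ess {A B : Type*} {n : ℕ} (f : (Fin n → A) → B) (y y' : Fin n → A)
    (h : ∀ j, EssentialAt f j → y j = y' j) : f y = f y' :=
  agree_on_ess_aux f Finset.univ y y' (fun j hj => absurd (Finset.mem_univ j) hj) h

theorem minor_equiv_of_essArity_eq {A B : Type*} [Nontrivial A] [Nontrivial B]
    {n k : ℕ} (f : (Fin n → A) → B) (g : (Fin k → A) → B)
    (hess : 2 ≤ essArity f)
    (σ : Fin n → Fin k) (h : ∀ x : Fin k → A, g x = f (fun i => x (σ i)))
    (heq : essArity g = essArity f) :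
    ∃ τ : Fin k → Fin n, ∀ y : Fin n → A, f y = g (fun i => y (τ i)) := by
  classical
  -- every essential variable of g comes from an essential variable of f
  have claim : ∀ i : Fin k, EssentialAt g i → ∃ j, EssentialAt f j ∧ σ j = i := by
    rintro i ⟨x, b, hxb⟩
    by_contra hc
    push_neg at hc
    apply hxb
    rw [h, h]
    apply agree_on_ess f
    intro j hj
    have hji : σ j ≠ i := hc j hj
    rw [Function.update_of_ne hji]
  -- the choice map
  have cprop : ∀ i : {i : Fin k // EssentialAt g i},
      EssentialAt f (claim i.1 i.2).choose ∧ σ (claim i.1 i.2).choose = i.1 :=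
    fun i => (claim i.1 i.2).choose_spec
  set c : {i : Fin k // EssentialAt g i} → {j : Fin n // EssentialAt f j} :=
    fun i => ⟨(claim i.1 i.2).choose, (cprop i).1⟩ with hc
  have cinj : Function.Injective c := by
    intro i i' hii
    have : σ (c i).1 = σ (c i').1 := by rw [hii]
    rw [(cprop i).2, (cprop i').2] at this
    exact Subtype.ext this
  have hcard : Nat.card {i : Fin k // EssentialAt g i} = Nat.card {j : Fin n // EssentialAt f j} := by
    have h1 : Nat.card {i : Fin k // EssentialAt g i} = essArity g := by
      rw [essArity, ← Nat.card_coe_set_eq]; rfl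
    have h2 : Nat.card {j : Fin n // EssentialAt f j} = essArity f := by
      rw [essArity, ← Nat.card_coe_set_eq]; rfl
    rw [h1, h2, heq]
  have cbij : Function.Bijective c :=
    (Nat.bijective_iff_injective_and_card c).mpr ⟨cinj, hcard⟩
  -- uniqueness: σ is injective on essential variables of f
  have uniq : ∀ j j', EssentialAt f j → EssentialAt f j' → σ j = σ j' → j = j' := by
    intro j j' hj hj' hσ
    obtain ⟨i, hi⟩ := cbij.2 ⟨j, hj⟩
    obtain ⟨i', hi'⟩ := cbij.2 ⟨j', hj'⟩
    have e1 : i.1 = σ j := by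
      rw [← (cprop i).2]; exact congrArg (fun x => σ x.1) hi
    have e2 : i'.1 = σ j' := by
      rw [← (cprop i').2]; exact congrArg (fun x => σ x.1) hi'
    have : i = i' := Subtype.ext (by rw [e1, e2, hσ])
    have := congrArg c (this)
    rw [hi, hi'] at this
    exact congrArg Subtype.val this
  -- a default element of Fin n
  have hne : {j : Fin n | EssentialAt f j}.Nonempty := by
    rw [← Set.ncard_pos (Set.toFinite _)]
    unfold essArity at hess
    omega
  obtain ⟨j₀, _⟩ := hne
  -- define τ
  set τ : Fin k → Fin n := fun i =>
    if hi : ∃ j, EssentialAt f j ∧ σ j = i then hi.choose else j₀ with hτ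
  have hτσ : ∀ j, EssentialAt f j → τ (σ j) = j := by
    intro j hj
    have hi : ∃ j', EssentialAt f j' ∧ σ j' = σ j := ⟨j, hj, rfl⟩
    rw [hτ]
    simp only [hi, dif_pos]
    exact uniq _ _ hi.choose_spec.1 hj hi.choose_spec.2
  refine ⟨τ, fun y => ?_⟩
  rw [h]
  apply agree_on_ess f
  intro j hj
  rw [hτσ j hj]
end
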